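/- arXiv:2402.10377 — 3 statements merged into one kernel-verified Lean document; each statement's English description precedes it below -/
import Mathlib

section
/- Let n ≥ 1, 1 < p < ∞, 0 < q₁ < p−1, 0 < q₂ < p−1, 0 < α < n/p, and let σ be a nonnegative Radon measure on ℝⁿ. There exists a constant c > 0 depending only on n, p, α, q₁ and q₂ such that every nontrivial supersolution (u,v) of the Wolff integral system (u and v not σ-a.e. zero) satisfies u(x) ≥ c (W_{α,p}σ(x))^{γ₁} and v(x) ≥ c (W_{α,p}σ(x))^{γ₂} for σ-a.e. x ∈ ℝⁿ. -/
open MeasureTheory Metric Set ENNReal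

noncomputable section

/-- Euclidean space `ℝⁿ`. -/
abbrev Rn (n : ℕ) := EuclideanSpace ℝ (Fin n)

/-- The Wolff potential `W_{α,p}μ(x) = ∫₀^∞ (μ(B(x,t))/t^{n−αp})^{1/(p−1)} dt/t`. -/
def wolff (n : ℕ) (α p : ℝ) (μ : Measure (Rn n)) (x : Rn n) : ℝ≥0∞ :=
  ∫⁻ t in Ioi (0 : ℝ),
    (μ (ball x t) / ENNReal.ofReal (t ^ ((n : ℝ) - α * p))) ^ (1 / (p - 1))
      * ENNReal.ofReal (1 / t)

/-- `γ₁ = (p−1)(p−1+q₁)/((p−1)²−q₁q₂)`. -/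
def gamma1 (p q₁ q₂ : ℝ) : ℝ := (p - 1) * (p - 1 + q₁) / ((p - 1) ^ 2 - q₁ * q₂)

/-- `γ₂ = (p−1)(p−1+q₂)/((p−1)²−q₁q₂)`. -/
def gamma2 (p q₁ q₂ : ℝ) : ℝ := (p - 1) * (p - 1 + q₂) / ((p - 1) ^ 2 - q₁ * q₂)

/-- The Riesz potential `I_β μ(x) = ∫ |x−y|^{β−n} dμ(y)`. -/
def riesz (n : ℕ) (β : ℝ) (μ : Measure (Rn n)) (x : Rn n) : ℝ≥0∞ :=
  ∫⁻ y, ENNReal.ofReal (‖x - y‖ ^ (β - (n : ℝ))) ∂μ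

/-- The `(α,p)`-capacity of a set `E ⊆ ℝⁿ`. -/
def capacity (n : ℕ) (α p : ℝ) (E : Set (Rn n)) : ℝ≥0∞ :=
  ⨅ (f : Rn n → ℝ≥0∞) (_ : Measurable f)
    (_ : ∀ x ∈ E, 1 ≤ riesz n α (volume.withDensity f) x),
    ∫⁻ x, f x ^ p

/-- Condition (F): `∫₁^∞ (σ(B(0,t))/t^{n−αp})^{1/(p−1)} dt/t < ∞`. -/
def condF (n : ℕ) (α p : ℝ) (σ : Measure (Rn n)) : Prop :=
  ∫⁻ t in Ioi (1 : ℝ),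
    (σ (ball (0 : Rn n) t) / ENNReal.ofReal (t ^ ((n : ℝ) - α * p))) ^ (1 / (p - 1))
      * ENNReal.ofReal (1 / t) < ∞

/-- Condition (C): `σ(E) ≤ C_σ · cap_{α,p}(E)` for all compact sets `E`. -/
def condC (n : ℕ) (α p Cσ : ℝ) (σ : Measure (Rn n)) : Prop :=
  ∀ E : Set (Rn n), IsCompact E → σ E ≤ ENNReal.ofReal Cσ * capacity n α p E

/-- `u ∈ L^s_loc(ℝⁿ, dσ)`: `∫_B u^s dσ < ∞` for every ball `B`. -/
def locIn (n : ℕ) (σ : Measure (Rn n)) (s : ℝ) (u : Rn n → ℝ≥0∞) : Prop :=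
  ∀ (x : Rn n) (r : ℝ), ∫⁻ y in ball x r, u y ^ s ∂σ < ∞

/-- `(u,v)` is a solution of the Wolff integral system. -/
def isWolffSol (n : ℕ) (α p q₁ q₂ : ℝ) (σ : Measure (Rn n))
    (u v : Rn n → ℝ≥0∞) : Prop :=
  Measurable u ∧ Measurable v ∧ locIn n σ q₂ u ∧ locIn n σ q₁ v ∧
  (∀ᵐ x ∂σ, u x = wolff n α p (σ.withDensity fun y => v y ^ q₁) x) ∧
  (∀ᵐ x ∂σ, v x = wolff n α p (σ.withDensity fun y => u y ^ q₂) x)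

/-- `(u,v)` is a supersolution of the Wolff integral system. -/
def isWolffSuper (n : ℕ) (α p q₁ q₂ : ℝ) (σ : Measure (Rn n))
    (u v : Rn n → ℝ≥0∞) : Prop :=
  Measurable u ∧ Measurable v ∧ locIn n σ q₂ u ∧ locIn n σ q₁ v ∧
  (∀ᵐ x ∂σ, wolff n α p (σ.withDensity fun y => v y ^ q₁) x ≤ u x) ∧
  (∀ᵐ x ∂σ, wolff n α p (σ.withDensity fun y => u y ^ q₂) x ≤ v x)

/-- `(u,v)` is nontrivial: neither `u` nor `v` vanishes `σ`-a.e. -/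
def nontrivialPair (n : ℕ) (σ : Measure (Rn n)) (u v : Rn n → ℝ≥0∞) : Prop :=
  ¬ (∀ᵐ x ∂σ, u x = 0) ∧ ¬ (∀ᵐ x ∂σ, v x = 0)

/-- Condition (W_λ). -/
def condW (n : ℕ) (α p q₁ q₂ lam : ℝ) (σ : Measure (Rn n)) : Prop :=
  ∀ᵐ x ∂(volume : Measure (Rn n)),
    (wolff n α p (σ.withDensity fun y => (wolff n α p σ y) ^ (gamma2 p q₁ q₂ * q₁)) x
      ≤ ENNReal.ofReal lam *
        (wolff n α p σ x + (wolff n α p σ x) ^ gamma1 p q₁ q₂)) ∧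
    (wolff n α p (σ.withDensity fun y => (wolff n α p σ y) ^ (gamma1 p q₁ q₂ * q₂)) x
      ≤ ENNReal.ofReal lam *
        (wolff n α p σ x + (wolff n α p σ x) ^ gamma2 p q₁ q₂)) ∧
    (wolff n α p σ x + (wolff n α p σ x) ^ gamma1 p q₁ q₂ < ∞) ∧
    (wolff n α p σ x + (wolff n α p σ x) ^ gamma2 p q₁ q₂ < ∞)

/-!
Fix a centre `x` and encode each Wolff potential by a measure on radii,
`dω_μ(r) = (μ(B(x,r))/r^{n-αp})^{1/(p-1)} dr/r`, so that `W_{α,p}μ(x) = ω_μ(0,∞)`. Balls around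
`y ∈ B(x,t)` contain balls around `x` of half the radius, hence `W(μ)(y) ≥ c ω_μ(t,∞)`, and the
supersolution inequalities become a coupled system for `ν₁ = ω_{v^{q₁}σ}`, `ν₂ = ω_{u^{q₂}σ}` and
`m = ω_σ`: `dν₁ ≥ c ν₂(r,∞)^{θ₁} dm` and `dν₂ ≥ c ν₁(r,∞)^{θ₂} dm`, where `θᵢ = qᵢ/(p-1)`.
Because `γ₁ = 1 + θ₁γ₂` and `γ₂ = 1 + θ₂γ₁`, whichever of `ν₁(r,∞)^{1/γ₁}` and `ν₂(r,∞)^{1/γ₂}` is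
larger decreases at rate `≳ dm`, so their sum dominates `c m(r,∞)`. Integrating the first equation
over the radii carrying half of the `m`-mass then gives `ν₁(0,∞) ≳ m(0,∞)^{γ₁}`, that is
`u ≥ W(v^{q₁}σ) ≳ (Wσ)^{γ₁}`; symmetrically for `v`.
-/

open Filter Topology

namespace ENNReal

theorem rpow_add_ofReal_mul_rpow_sub_one_mul_le {X D A : ℝ≥0∞} {k : ℝ} (hk : 0 < k)
    (hk1 : k ≤ 1) (hA : A ≠ ∞) (h : X + D ≤ A) :
    X ^ k + ENNReal.ofReal k * A ^ (k - 1) * D ≤ A ^ k := by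
  rcases eq_or_ne A 0 with rfl | hA0
  · obtain ⟨rfl, rfl⟩ := add_eq_zero.1 (nonpos_iff_eq_zero.1 h)
    simp [ENNReal.zero_rpow_of_pos hk]
  have hX : X ≠ ∞ := ne_top_of_le_ne_top hA (le_self_add.trans h)
  have hD : D ≠ ∞ := ne_top_of_le_ne_top hA (le_add_self.trans h)
  set x := X.toReal
  set d := D.toReal
  set a := A.toReal
  have ha : 0 < a := ENNReal.toReal_pos hA0 hA
  have hxd : x + d ≤ a := by
    rw [← ENNReal.toReal_add hX hD]
    exact ENNReal.toReal_mono hA h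
  have hamgm : x ^ k * a ^ (1 - k) ≤ k * x + (1 - k) * a :=
    Real.geom_mean_le_arith_mean2_weighted hk.le (sub_nonneg.2 hk1) ENNReal.toReal_nonneg
      ha.le (by ring)
  have hinv : a ^ (k - 1) * a ^ (1 - k) = 1 := by
    rw [← Real.rpow_add ha]; simp
  have hpow : a ^ (k - 1) * a = a ^ k := by
    rw [← Real.rpow_add_one ha.ne']; ring_nf
  have key : x ^ k + k * a ^ (k - 1) * d ≤ a ^ k :=
    calc x ^ k + k * a ^ (k - 1) * d
        = x ^ k * (a ^ (k - 1) * a ^ (1 - k)) + k * a ^ (k - 1) * d := by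
          rw [hinv, mul_one]
      _ = a ^ (k - 1) * (x ^ k * a ^ (1 - k)) + k * a ^ (k - 1) * d := by ring
      _ ≤ a ^ (k - 1) * (k * x + (1 - k) * a) + k * a ^ (k - 1) * d := by gcongr
      _ = k * (a ^ (k - 1) * (x + d)) + (1 - k) * (a ^ (k - 1) * a) := by ring
      _ ≤ k * (a ^ (k - 1) * a) + (1 - k) * (a ^ (k - 1) * a) := by
          gcongr
      _ = a ^ k := by rw [hpow]; ring
  rw [← ENNReal.ofReal_toReal hX, ← ENNReal.ofReal_toReal hD, ← ENNReal.ofReal_toReal hA,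
    ENNReal.ofReal_rpow_of_nonneg ENNReal.toReal_nonneg hk.le, ENNReal.ofReal_rpow_of_pos ha,
    ENNReal.ofReal_rpow_of_pos ha, ← ENNReal.ofReal_mul hk.le,
    ← ENNReal.ofReal_mul (by positivity), ← ENNReal.ofReal_add (by positivity) (by positivity)]
  exact ENNReal.ofReal_le_ofReal key

theorem rpow_div_two_le {θ : ℝ} (hθ : 0 ≤ θ) (hθ1 : θ ≤ 1) (Y : ℝ≥0∞) :
    Y ^ θ / 2 ≤ (Y / 2) ^ θ := by
  rw [ENNReal.div_rpow_of_nonneg _ _ hθ]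
  refine ENNReal.div_le_div_left ?_ _
  simpa using ENNReal.rpow_le_rpow_of_exponent_le one_le_two hθ1

theorem ofReal_mul_rpow_sub_one_div_two_mul_rpow {c k γ : ℝ} (hc : 0 ≤ c) (hk : 0 ≤ k)
    (hγ : 1 ≤ γ) (M : ℝ≥0∞) :
    ENNReal.ofReal (c * k ^ (γ - 1) / 2) * M ^ γ
      = ENNReal.ofReal c * (ENNReal.ofReal k * M) ^ (γ - 1) * (M / 2) := by
  have hM : M ^ γ = M ^ (γ - 1) * M :=
    calc M ^ γ = M ^ ((γ - 1) + 1) := by rw [sub_add_cancel]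
      _ = M ^ (γ - 1) * M := by
          rw [ENNReal.rpow_add_of_nonneg (γ - 1) 1 (by linarith) zero_le_one, ENNReal.rpow_one]
  rw [hM, ENNReal.mul_rpow_of_nonneg _ _ (by linarith),
    ENNReal.ofReal_rpow_of_nonneg hk (by linarith), ENNReal.ofReal_div_of_pos two_pos,
    ENNReal.ofReal_mul hc, ENNReal.ofReal_ofNat]
  simp only [div_eq_mul_inv]
  ring

end ENNReal

theorem one_le_rpow_mul_rpow_of_rpow_inv_le {X Y : ℝ≥0∞} {θ γ γ' : ℝ} (hX0 : X ≠ 0) (hX : X ≠ ∞)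
    (hθ : 0 ≤ θ) (hγ' : 0 < γ') (hγ : γ = 1 + θ * γ') (h : X ^ γ⁻¹ ≤ Y ^ γ'⁻¹) :
    1 ≤ X ^ (γ⁻¹ - 1) * Y ^ θ := by
  have hγ0 : γ ≠ 0 := by nlinarith
  have hle : X ^ (1 - γ⁻¹) ≤ Y ^ θ :=
    calc X ^ (1 - γ⁻¹) = (X ^ γ⁻¹) ^ (θ * γ') := by
          rw [← ENNReal.rpow_mul]; congr 1; field_simp; linarith
      _ ≤ (Y ^ γ'⁻¹) ^ (θ * γ') := by gcongr
      _ = Y ^ θ := by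
          rw [← ENNReal.rpow_mul]; congr 1; field_simp
  calc 1 = X ^ (γ⁻¹ - 1) * X ^ (1 - γ⁻¹) := by
        rw [← ENNReal.rpow_add _ _ hX0 hX]; simp
    _ ≤ X ^ (γ⁻¹ - 1) * Y ^ θ := by gcongr

theorem tendsto_measure_Ioi_nhdsGT (μ : Measure ℝ) (t : ℝ) :
    Tendsto (fun r => μ (Ioi r)) (𝓝[>] t) (𝓝 (μ (Ioi t))) := by
  have hunion : ⋃ r : Ioi t, Ioi (r : ℝ) = Ioi t := by
    ext x
    simp only [mem_iUnion, mem_Ioi, Subtype.exists, exists_prop]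
    exact ⟨fun ⟨r, hr, hx⟩ => hr.trans hx, exists_between⟩
  have h := tendsto_measure_iUnion_atBot (μ := μ) (s := fun r : Ioi t => Ioi (r : ℝ))
    fun a b hab => Ioi_subset_Ioi hab
  rw [hunion] at h
  rwa [← map_coe_Ioi_atBot, tendsto_map'_iff]

theorem tendsto_measure_Ioc_nhdsLT (μ : Measure ℝ) [NullSingletonClass μ] (s t : ℝ) :
    Tendsto (fun r => μ (Ioc s r)) (𝓝[<] t) (𝓝 (μ (Ioc s t))) := by
  have hunion : ⋃ r : Iio t, Ioc s (r : ℝ) = Ioo s t := by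
    ext x
    simp only [mem_iUnion, mem_Ioc, mem_Ioo, Subtype.exists, mem_Iio, exists_prop]
    exact ⟨fun ⟨r, hr, hsx, hxr⟩ => ⟨hsx, hxr.trans_lt hr⟩,
      fun ⟨hsx, hxt⟩ => ⟨x, hxt, hsx, le_rfl⟩⟩
  have h := tendsto_measure_iUnion_atTop (μ := μ) (s := fun r : Iio t => Ioc s (r : ℝ))
    fun a b hab => Ioc_subset_Ioc_right hab
  rw [hunion, measure_congr Ioo_ae_eq_Ioc] at h
  rwa [← map_coe_Iio_atTop, tendsto_map'_iff]

theorem tendsto_measure_Ioc_atTop (μ : Measure ℝ) (s : ℝ) :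
    Tendsto (fun t => μ (Ioc s t)) atTop (𝓝 (μ (Ioi s))) := by
  rw [← iUnion_Ioc_eq_Ioi_self_iff.2 fun x _ => ⟨x, le_rfl⟩]
  exact tendsto_measure_iUnion_atTop fun a b hab => Ioc_subset_Ioc_right hab

theorem tendsto_measure_Ioc_inv_nat_add_one (μ : Measure ℝ) :
    Tendsto (fun k : ℕ => μ (Ioc ((k : ℝ) + 1)⁻¹ ((k : ℝ) + 1))) atTop (𝓝 (μ (Ioi 0))) := by
  have hunion : ⋃ k : ℕ, Ioc ((k : ℝ) + 1)⁻¹ ((k : ℝ) + 1) = Ioi 0 := by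
    refine (iUnion_subset fun k r hr => lt_trans (by positivity) hr.1).antisymm
      fun r (hr : 0 < r) => mem_iUnion.2 ?_
    obtain ⟨k, hk⟩ := exists_nat_gt (max r r⁻¹)
    refine ⟨k, ?_, by linarith [le_max_left r r⁻¹]⟩
    rw [inv_lt_comm₀ (by positivity) hr]
    linarith [le_max_right r r⁻¹]
  rw [← hunion]
  exact tendsto_measure_iUnion_atTop fun k l hkl =>
    Ioc_subset_Ioc (inv_anti₀ (by positivity) (by gcongr)) (by gcongr)

theorem tendsto_measure_Ioi_atTop (μ : Measure ℝ) [IsFiniteMeasure μ] :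
    Tendsto (fun r => μ (Ioi r)) atTop (𝓝 0) := by
  have hinter : ⋂ r : ℝ, Ioi r = ∅ :=
    eq_empty_of_forall_notMem fun x hx => lt_irrefl x (mem_iInter.1 hx x)
  have h := tendsto_measure_iInter_atTop (μ := μ)
    (fun _ => measurableSet_Ioi.nullMeasurableSet) (fun a b hab => Ioi_subset_Ioi hab)
    ⟨0, measure_ne_top μ _⟩
  rwa [hinter, measure_empty] at h

theorem eventually_measure_Ioi_le_two_mul (μ : Measure ℝ) {t : ℝ} (h0 : μ (Ioi t) ≠ 0)
    (htop : μ (Ioi t) ≠ ∞) : ∀ᶠ r in 𝓝[>] t, μ (Ioi t) ≤ 2 * μ (Ioi r) := by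
  filter_upwards [(tendsto_measure_Ioi_nhdsGT μ t).eventually
    (lt_mem_nhds (ENNReal.half_lt_self h0 htop))] with r hr
  rw [mul_comm]
  exact (ENNReal.div_le_iff two_ne_zero ENNReal.ofNat_ne_top).1 hr.le

theorem exists_half_measure_Ioc_le (μ : Measure ℝ) [IsFiniteMeasure μ] (s : ℝ) :
    ∃ r₀, μ (Ioi s) / 2 ≤ μ (Ioc s r₀) ∧ ∀ r < r₀, μ (Ioi s) / 2 ≤ μ (Ioi r) := by
  rcases eq_or_ne (μ (Ioi s)) 0 with h0 | h0
  · exact ⟨s, by simp [h0], fun r _ => by simp [h0]⟩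
  set M := μ (Ioi s)
  have hhalf : M / 2 < M := ENNReal.half_lt_self h0 (measure_ne_top μ _)
  set A := {r | μ (Ioi r) ≤ M / 2}
  have hA : A.Nonempty :=
    ((tendsto_measure_Ioi_atTop μ).eventually
      (gt_mem_nhds (ENNReal.half_pos h0))).exists.imp fun _ hr => hr.le
  have hsA : ∀ r ∈ A, s < r := fun r hr =>
    lt_of_not_ge fun hrs => (hhalf.trans_le (measure_mono (Ioi_subset_Ioi hrs))).not_ge hr
  have hbdd : BddBelow A := ⟨s, fun r hr => (hsA r hr).le⟩
  set r₀ := sInf A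
  have hr₀ : μ (Ioi r₀) ≤ M / 2 := by
    refine le_of_tendsto (tendsto_measure_Ioi_nhdsGT μ r₀)
      (eventually_nhdsWithin_of_forall fun r hr => ?_)
    obtain ⟨a, haA, har⟩ := (csInf_lt_iff hbdd hA).1 hr
    exact (measure_mono (Ioi_subset_Ioi har.le)).trans haA
  refine ⟨r₀, ?_, fun r hr => ?_⟩
  swap
  · have hrA : r ∉ A := notMem_of_lt_csInf hr hbdd
    exact (not_le.1 hrA).le
  have hsplit : M ≤ μ (Ioc s r₀) + M / 2 :=
    calc M ≤ μ (Ioc s r₀ ∪ Ioi r₀) := measure_mono fun x hx => by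
          rcases le_or_gt x r₀ with h | h
          exacts [Or.inl ⟨hx, h⟩, Or.inr h]
      _ ≤ μ (Ioc s r₀) + M / 2 := (measure_union_le _ _).trans (by gcongr)
  exact ENNReal.le_of_add_le_add_right (ENNReal.div_ne_top (measure_ne_top μ _) two_ne_zero)
    (by rwa [ENNReal.add_halves])

theorem Antitone.add_const_mul_measure_Ioc_le {φ : ℝ → ℝ≥0∞} (hφ : Antitone φ)
    (μ : Measure ℝ) [NullSingletonClass μ] {C : ℝ≥0∞} (hC : C ≠ ∞) {s t : ℝ} (hst : s ≤ t)
    (hstep : ∀ T ∈ Ico s t, ∀ᶠ t' in 𝓝[>] T, φ t' + C * μ (Ioc T t') ≤ φ T) :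
    φ t + C * μ (Ioc s t) ≤ φ s := by
  set A := {T | T ≤ t ∧ φ T + C * μ (Ioc s T) ≤ φ s}
  have hsA : s ∈ A := ⟨hst, by simp⟩
  have hbdd : BddAbove A := ⟨t, fun _ h => h.1⟩
  set T := sSup A
  have hsT : s ≤ T := le_csSup hbdd hsA
  have hTt : T ≤ t := csSup_le ⟨s, hsA⟩ fun _ h => h.1
  have hTA : φ T + C * μ (Ioc s T) ≤ φ s := by
    have hlim : Tendsto (fun a => φ T + C * μ (Ioc s a)) (𝓝[<] T)
        (𝓝 (φ T + C * μ (Ioc s T))) :=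
      tendsto_const_nhds.add (ENNReal.Tendsto.const_mul (tendsto_measure_Ioc_nhdsLT μ s T)
        (Or.inr hC))
    refine _root_.le_of_tendsto hlim (eventually_nhdsWithin_of_forall fun a ha => ?_)
    obtain ⟨b, hbA, hab⟩ := exists_lt_of_lt_csSup ⟨s, hsA⟩ ha
    calc φ T + C * μ (Ioc s a) ≤ φ b + C * μ (Ioc s b) :=
          add_le_add (hφ (le_csSup hbdd hbA)) (by gcongr)
      _ ≤ φ s := hbA.2
  rcases hTt.eq_or_lt with hTt | hTt
  · rwa [← hTt]
  obtain ⟨t', ht', hTt', ht't⟩ := ((hstep T ⟨hsT, hTt⟩).and (Ioc_mem_nhdsGT hTt)).exists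
  have ht'A : t' ∈ A := by
    refine ⟨ht't, ?_⟩
    calc φ t' + C * μ (Ioc s t') = (φ t' + C * μ (Ioc T t')) + C * μ (Ioc s T) := by
          rw [← Ioc_union_Ioc_eq_Ioc hsT hTt'.le,
            measure_union (Ioc_disjoint_Ioc_of_le le_rfl) measurableSet_Ioc]
          ring
      _ ≤ φ T + C * μ (Ioc s T) := by gcongr
      _ ≤ φ s := hTA
  exact ((le_csSup hbdd ht'A).not_gt hTt').elim

theorem const_mul_rpow_mul_measure_le {μ ν ρ : Measure ℝ} {c θ : ℝ} {m : ℝ≥0∞}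
    (h : ENNReal.ofReal c • μ.withDensity (fun r => ρ (Ioi r) ^ θ) ≤ ν) (hθ : 0 ≤ θ)
    {S : Set ℝ} (hS : MeasurableSet S) (hm : ∀ᵐ r ∂μ, r ∈ S → m ≤ ρ (Ioi r)) :
    ENNReal.ofReal c * m ^ θ * μ S ≤ ν S :=
  calc ENNReal.ofReal c * m ^ θ * μ S
      = ENNReal.ofReal c * ∫⁻ _ in S, m ^ θ ∂μ := by rw [setLIntegral_const, mul_assoc]
    _ ≤ ENNReal.ofReal c * ∫⁻ r in S, ρ (Ioi r) ^ θ ∂μ := by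
        gcongr 1
        refine setLIntegral_mono_ae' hS ?_
        filter_upwards [hm] with r hr hrS
        exact ENNReal.rpow_le_rpow (hr hrS) hθ
    _ = (ENNReal.ofReal c • μ.withDensity (fun r => ρ (Ioi r) ^ θ)) S := by
        rw [Measure.smul_apply, withDensity_apply _ hS, smul_eq_mul]
    _ ≤ ν S := h S

theorem one_le_of_eq_one_add_mul {θ₁ θ₂ γ₁ γ₂ : ℝ} (hθ₁ : 0 ≤ θ₁) (hθ₁' : θ₁ ≤ 1)
    (hθ₂ : 0 ≤ θ₂) (hθ₂' : θ₂ ≤ 1) (hγ₁ : γ₁ = 1 + θ₁ * γ₂) (hγ₂ : γ₂ = 1 + θ₂ * γ₁) :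
    1 ≤ γ₁ := by
  have h : (1 - θ₁ * θ₂) * γ₁ = 1 + θ₁ := by rw [hγ₁, hγ₂] at *; nlinarith
  have hθ : 0 ≤ θ₁ * θ₂ := mul_nonneg hθ₁ hθ₂
  have hθ' : θ₁ * θ₂ ≤ 1 := mul_le_one₀ hθ₁' hθ₂ hθ₂'
  rcases le_or_gt 0 γ₁ with h0 | h0
  · nlinarith [mul_nonneg hθ h0]
  · nlinarith [mul_nonneg (sub_nonneg.2 hθ') (neg_nonneg.2 h0.le)]

section CoupledTails

variable {μ ν₁ ν₂ : Measure ℝ} {c θ₁ θ₂ γ₁ γ₂ : ℝ}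

def tailRootSum (ν₁ ν₂ : Measure ℝ) (γ₁ γ₂ r : ℝ) : ℝ≥0∞ :=
  ν₁ (Ioi r) ^ γ₁⁻¹ + ν₂ (Ioi r) ^ γ₂⁻¹

theorem antitone_tailRootSum (hγ₁ : 0 ≤ γ₁) (hγ₂ : 0 ≤ γ₂) :
    Antitone (tailRootSum ν₁ ν₂ γ₁ γ₂) := fun _ _ hab =>
  add_le_add (ENNReal.rpow_le_rpow (measure_mono (Ioi_subset_Ioi hab)) (inv_nonneg.2 hγ₁))
    (ENNReal.rpow_le_rpow (measure_mono (Ioi_subset_Ioi hab)) (inv_nonneg.2 hγ₂))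

theorem rpow_inv_add_le_of_rpow_inv_le
    (h₁ : ENNReal.ofReal c • μ.withDensity (fun r => ν₂ (Ioi r) ^ θ₁) ≤ ν₁)
    (hθ₁ : 0 ≤ θ₁) (hθ₁' : θ₁ ≤ 1) (hγ₂ : 0 < γ₂) (hγ₁ : γ₁ = 1 + θ₁ * γ₂)
    {T t : ℝ} (hTt : T ≤ t) (hX0 : ν₁ (Ioi T) ≠ 0) (hX : ν₁ (Ioi T) ≠ ∞)
    (hhalf : ν₂ (Ioi T) ≤ 2 * ν₂ (Ioi t)) (hXY : ν₁ (Ioi T) ^ γ₁⁻¹ ≤ ν₂ (Ioi T) ^ γ₂⁻¹) :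
    ν₁ (Ioi t) ^ γ₁⁻¹ + ENNReal.ofReal (c / 2 * γ₁⁻¹) * μ (Ioc T t) ≤ ν₁ (Ioi T) ^ γ₁⁻¹ := by
  set X := ν₁ (Ioi T)
  set Y := ν₂ (Ioi T)
  have hγ₁1 : 1 ≤ γ₁ := by rw [hγ₁]; nlinarith
  have hk : 0 < γ₁⁻¹ := by positivity
  have hk1 : γ₁⁻¹ ≤ 1 := inv_le_one_of_one_le₀ hγ₁1
  have hYt : Y / 2 ≤ ν₂ (Ioi t) := by
    rw [ENNReal.div_le_iff two_ne_zero ENNReal.ofNat_ne_top, mul_comm]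
    exact hhalf
  have hdrop : ν₁ (Ioi t) + ENNReal.ofReal c * (Y / 2) ^ θ₁ * μ (Ioc T t) ≤ X :=
    calc ν₁ (Ioi t) + ENNReal.ofReal c * (Y / 2) ^ θ₁ * μ (Ioc T t)
        ≤ ν₁ (Ioi t) + ν₁ (Ioc T t) := by
          gcongr
          exact const_mul_rpow_mul_measure_le h₁ hθ₁ measurableSet_Ioc
            (ae_of_all _ fun r hr => hYt.trans (measure_mono (Ioi_subset_Ioi hr.2)))
      _ = X := by
          rw [add_comm, ← measure_union (Ioc_disjoint_Ioi le_rfl) measurableSet_Ioi,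
            Ioc_union_Ioi_eq_Ioi hTt]
  have hone : 1 ≤ X ^ (γ₁⁻¹ - 1) * Y ^ θ₁ :=
    one_le_rpow_mul_rpow_of_rpow_inv_le hX0 hX hθ₁ hγ₂ hγ₁ hXY
  calc ν₁ (Ioi t) ^ γ₁⁻¹ + ENNReal.ofReal (c / 2 * γ₁⁻¹) * μ (Ioc T t)
      ≤ ν₁ (Ioi t) ^ γ₁⁻¹ +
          ENNReal.ofReal γ₁⁻¹ * X ^ (γ₁⁻¹ - 1) *
            (ENNReal.ofReal c * (Y / 2) ^ θ₁ * μ (Ioc T t)) := by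
        refine add_le_add le_rfl ?_
        calc ENNReal.ofReal (c / 2 * γ₁⁻¹) * μ (Ioc T t)
            = ENNReal.ofReal γ₁⁻¹ * (ENNReal.ofReal c / 2) * 1 * μ (Ioc T t) := by
              rw [mul_comm (c / 2), ENNReal.ofReal_mul hk.le, ENNReal.ofReal_div_of_pos two_pos,
                ENNReal.ofReal_ofNat, mul_one]
          _ ≤ ENNReal.ofReal γ₁⁻¹ * (ENNReal.ofReal c / 2) * (X ^ (γ₁⁻¹ - 1) * Y ^ θ₁) *
                μ (Ioc T t) := by gcongr
          _ = ENNReal.ofReal γ₁⁻¹ * X ^ (γ₁⁻¹ - 1) *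
                (ENNReal.ofReal c * (Y ^ θ₁ / 2) * μ (Ioc T t)) := by
              simp only [div_eq_mul_inv]; ring
          _ ≤ _ := by gcongr; exact ENNReal.rpow_div_two_le hθ₁ hθ₁' Y
    _ ≤ X ^ γ₁⁻¹ := ENNReal.rpow_add_ofReal_mul_rpow_sub_one_mul_le hk hk1 hX hdrop

/-- Whichever of the two roots is larger pays for the decrease. -/
theorem tailRootSum_add_le_of_le_two_mul
    (h₁ : ENNReal.ofReal c • μ.withDensity (fun r => ν₂ (Ioi r) ^ θ₁) ≤ ν₁)
    (h₂ : ENNReal.ofReal c • μ.withDensity (fun r => ν₁ (Ioi r) ^ θ₂) ≤ ν₂)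
    (hc : 0 ≤ c) (hθ₁ : 0 ≤ θ₁) (hθ₁' : θ₁ ≤ 1) (hθ₂ : 0 ≤ θ₂) (hθ₂' : θ₂ ≤ 1)
    (hγ₁ : γ₁ = 1 + θ₁ * γ₂) (hγ₂ : γ₂ = 1 + θ₂ * γ₁) {T t : ℝ} (hTt : T ≤ t)
    (hX0 : ν₁ (Ioi T) ≠ 0) (hX : ν₁ (Ioi T) ≠ ∞) (hY0 : ν₂ (Ioi T) ≠ 0) (hY : ν₂ (Ioi T) ≠ ∞)
    (hhalf₁ : ν₁ (Ioi T) ≤ 2 * ν₁ (Ioi t)) (hhalf₂ : ν₂ (Ioi T) ≤ 2 * ν₂ (Ioi t)) :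
    tailRootSum ν₁ ν₂ γ₁ γ₂ t + ENNReal.ofReal (c / 2 * min γ₁⁻¹ γ₂⁻¹) * μ (Ioc T t)
      ≤ tailRootSum ν₁ ν₂ γ₁ γ₂ T := by
  have hγ₁1 := one_le_of_eq_one_add_mul hθ₁ hθ₁' hθ₂ hθ₂' hγ₁ hγ₂
  have hγ₂1 := one_le_of_eq_one_add_mul hθ₂ hθ₂' hθ₁ hθ₁' hγ₂ hγ₁
  have hmono₁ : ν₁ (Ioi t) ^ γ₁⁻¹ ≤ ν₁ (Ioi T) ^ γ₁⁻¹ := by gcongr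
  have hmono₂ : ν₂ (Ioi t) ^ γ₂⁻¹ ≤ ν₂ (Ioi T) ^ γ₂⁻¹ := by gcongr
  simp only [tailRootSum]
  rcases le_total (ν₁ (Ioi T) ^ γ₁⁻¹) (ν₂ (Ioi T) ^ γ₂⁻¹) with hXY | hYX
  · have h := rpow_inv_add_le_of_rpow_inv_le h₁ hθ₁ hθ₁' (by linarith) hγ₁ hTt hX0 hX hhalf₂ hXY
    calc _ ≤ (ν₁ (Ioi t) ^ γ₁⁻¹ + ENNReal.ofReal (c / 2 * γ₁⁻¹) * μ (Ioc T t)) +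
            ν₂ (Ioi t) ^ γ₂⁻¹ := by
          rw [add_right_comm]
          gcongr
          exact min_le_left _ _
      _ ≤ ν₁ (Ioi T) ^ γ₁⁻¹ + ν₂ (Ioi T) ^ γ₂⁻¹ := add_le_add h hmono₂
  · have h := rpow_inv_add_le_of_rpow_inv_le h₂ hθ₂ hθ₂' (by linarith) hγ₂ hTt hY0 hY hhalf₁ hYX
    calc _ ≤ ν₁ (Ioi t) ^ γ₁⁻¹ +
            (ν₂ (Ioi t) ^ γ₂⁻¹ + ENNReal.ofReal (c / 2 * γ₂⁻¹) * μ (Ioc T t)) := by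
          rw [add_assoc]
          gcongr
          exact min_le_right _ _
      _ ≤ ν₁ (Ioi T) ^ γ₁⁻¹ + ν₂ (Ioi T) ^ γ₂⁻¹ := add_le_add hmono₁ h

theorem tailRootSum_add_le [NullSingletonClass μ]
    (h₁ : ENNReal.ofReal c • μ.withDensity (fun r => ν₂ (Ioi r) ^ θ₁) ≤ ν₁)
    (h₂ : ENNReal.ofReal c • μ.withDensity (fun r => ν₁ (Ioi r) ^ θ₂) ≤ ν₂)
    (hc : 0 ≤ c) (hθ₁ : 0 ≤ θ₁) (hθ₁' : θ₁ ≤ 1) (hθ₂ : 0 ≤ θ₂) (hθ₂' : θ₂ ≤ 1)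
    (hγ₁ : γ₁ = 1 + θ₁ * γ₂) (hγ₂ : γ₂ = 1 + θ₂ * γ₁)
    (hpos₁ : ∀ r, ν₁ (Ioi r) ≠ 0) (hpos₂ : ∀ r, ν₂ (Ioi r) ≠ 0) {s t : ℝ} (hst : s ≤ t)
    (hfin₁ : ν₁ (Ioi s) ≠ ∞) (hfin₂ : ν₂ (Ioi s) ≠ ∞) :
    tailRootSum ν₁ ν₂ γ₁ γ₂ t + ENNReal.ofReal (c / 2 * min γ₁⁻¹ γ₂⁻¹) * μ (Ioc s t)
      ≤ tailRootSum ν₁ ν₂ γ₁ γ₂ s := by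
  have hγ₁1 := one_le_of_eq_one_add_mul hθ₁ hθ₁' hθ₂ hθ₂' hγ₁ hγ₂
  have hγ₂1 := one_le_of_eq_one_add_mul hθ₂ hθ₂' hθ₁ hθ₁' hγ₂ hγ₁
  refine (antitone_tailRootSum (by linarith) (by linarith)).add_const_mul_measure_Ioc_le μ
    ENNReal.ofReal_ne_top hst fun T hT => ?_
  have hX : ν₁ (Ioi T) ≠ ∞ := ne_top_of_le_ne_top hfin₁ (measure_mono (Ioi_subset_Ioi hT.1))
  have hY : ν₂ (Ioi T) ≠ ∞ := ne_top_of_le_ne_top hfin₂ (measure_mono (Ioi_subset_Ioi hT.1))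
  filter_upwards [self_mem_nhdsWithin, eventually_measure_Ioi_le_two_mul ν₁ (hpos₁ T) hX,
    eventually_measure_Ioi_le_two_mul ν₂ (hpos₂ T) hY] with t' hTt' hhalf₁ hhalf₂
  exact tailRootSum_add_le_of_le_two_mul h₁ h₂ hc hθ₁ hθ₁' hθ₂ hθ₂' hγ₁ hγ₂ (le_of_lt hTt')
    (hpos₁ T) hX (hpos₂ T) hY hhalf₁ hhalf₂

theorem const_mul_measure_Ioi_le_tailRootSum [NullSingletonClass μ]
    (h₁ : ENNReal.ofReal c • μ.withDensity (fun r => ν₂ (Ioi r) ^ θ₁) ≤ ν₁)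
    (h₂ : ENNReal.ofReal c • μ.withDensity (fun r => ν₁ (Ioi r) ^ θ₂) ≤ ν₂)
    (hc : 0 ≤ c) (hθ₁ : 0 ≤ θ₁) (hθ₁' : θ₁ ≤ 1) (hθ₂ : 0 ≤ θ₂) (hθ₂' : θ₂ ≤ 1)
    (hγ₁ : γ₁ = 1 + θ₁ * γ₂) (hγ₂ : γ₂ = 1 + θ₂ * γ₁)
    (hpos₁ : ∀ r, ν₁ (Ioi r) ≠ 0) (hpos₂ : ∀ r, ν₂ (Ioi r) ≠ 0) (s : ℝ) :
    ENNReal.ofReal (c / 2 * min γ₁⁻¹ γ₂⁻¹) * μ (Ioi s) ≤ tailRootSum ν₁ ν₂ γ₁ γ₂ s := by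
  have hγ₁1 := one_le_of_eq_one_add_mul hθ₁ hθ₁' hθ₂ hθ₂' hγ₁ hγ₂
  have hγ₂1 := one_le_of_eq_one_add_mul hθ₂ hθ₂' hθ₁ hθ₁' hγ₂ hγ₁
  rcases eq_or_ne (ν₁ (Ioi s)) ∞ with hfin₁ | hfin₁
  · simp [tailRootSum, hfin₁, ENNReal.top_rpow_of_pos (inv_pos.2 (by linarith : 0 < γ₁))]
  rcases eq_or_ne (ν₂ (Ioi s)) ∞ with hfin₂ | hfin₂
  · simp [tailRootSum, hfin₂, ENNReal.top_rpow_of_pos (inv_pos.2 (by linarith : 0 < γ₂))]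
  refine le_of_tendsto
    (ENNReal.Tendsto.const_mul (tendsto_measure_Ioc_atTop μ s) (Or.inr ENNReal.ofReal_ne_top)) ?_
  filter_upwards [eventually_ge_atTop s] with t hst
  exact le_add_self.trans
    (tailRootSum_add_le h₁ h₂ hc hθ₁ hθ₁' hθ₂ hθ₂' hγ₁ hγ₂ hpos₁ hpos₂ hst hfin₁ hfin₂)

theorem rpow_le_measure_Ioi_of_add_le_tailRootSum {L : ℝ≥0∞} {r : ℝ} (hL : L ≠ ∞)
    (hγ₂ : 0 < γ₂) (hroot : ν₁ (Ioi r) ^ γ₁⁻¹ ≤ L) (h : L + L ≤ tailRootSum ν₁ ν₂ γ₁ γ₂ r) :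
    L ^ γ₂ ≤ ν₂ (Ioi r) := by
  have hle : L ≤ ν₂ (Ioi r) ^ γ₂⁻¹ :=
    (ENNReal.add_le_add_iff_left hL).1 (h.trans (add_le_add_left hroot _))
  calc L ^ γ₂ ≤ (ν₂ (Ioi r) ^ γ₂⁻¹) ^ γ₂ := by gcongr
    _ = ν₂ (Ioi r) := by rw [← ENNReal.rpow_mul, inv_mul_cancel₀ hγ₂.ne', ENNReal.rpow_one]

end CoupledTails

/-- Either `ν₁(s, ∞)` is already large, or `ν₁(s, ∞)^{1/γ₁}` is small; then
`tailRootSum ≳ μ(r, ∞)` forces `ν₂(r, ∞)^{1/γ₂} ≳ μ(s, ∞)` on the stretch `(s, r₀)` carrying half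
the `μ`-mass of `(s, ∞)`, and the first inequality of the system integrated over that stretch makes
`ν₁(s, ∞)` large after all. -/
theorem exists_pos_forall_const_mul_measure_Ioi_rpow_le {c θ₁ θ₂ γ₁ γ₂ : ℝ} (hc : 0 < c)
    (hθ₁ : 0 ≤ θ₁) (hθ₁' : θ₁ ≤ 1) (hθ₂ : 0 ≤ θ₂) (hθ₂' : θ₂ ≤ 1)
    (hγ₁ : γ₁ = 1 + θ₁ * γ₂) (hγ₂ : γ₂ = 1 + θ₂ * γ₁) :
    ∃ c' > 0, ∀ (μ ν₁ ν₂ : Measure ℝ) [IsFiniteMeasure μ] [NullSingletonClass μ],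
      (∀ r, ν₁ (Ioi r) ≠ 0) → (∀ r, ν₂ (Ioi r) ≠ 0) →
      ENNReal.ofReal c • μ.withDensity (fun r => ν₂ (Ioi r) ^ θ₁) ≤ ν₁ →
      ENNReal.ofReal c • μ.withDensity (fun r => ν₁ (Ioi r) ^ θ₂) ≤ ν₂ →
      ∀ s, ENNReal.ofReal c' * μ (Ioi s) ^ γ₁ ≤ ν₁ (Ioi s) := by
  have hγ₁1 := one_le_of_eq_one_add_mul hθ₁ hθ₁' hθ₂ hθ₂' hγ₁ hγ₂
  have hγ₂1 := one_le_of_eq_one_add_mul hθ₂ hθ₂' hθ₁ hθ₁' hγ₂ hγ₁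
  set κ := c / 2 * min γ₁⁻¹ γ₂⁻¹
  have hκ4 : 0 < κ / 4 :=
    div_pos (mul_pos (by positivity) (lt_min (by positivity) (by positivity))) four_pos
  refine ⟨min ((κ / 4) ^ γ₁) (c * (κ / 4) ^ (γ₁ - 1) / 2),
    lt_min (Real.rpow_pos_of_pos hκ4 _) (by have := Real.rpow_pos_of_pos hκ4 (γ₁ - 1); positivity),
    fun μ ν₁ ν₂ _ _ hpos₁ hpos₂ h₁ h₂ s => ?_⟩
  set M := μ (Ioi s)
  set L := ENNReal.ofReal (κ / 4) * M
  have hL : L ≠ ∞ := ENNReal.mul_ne_top ENNReal.ofReal_ne_top (measure_ne_top μ _)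
  rcases le_or_gt (L ^ γ₁) (ν₁ (Ioi s)) with hbig | hsmall
  · calc ENNReal.ofReal (min ((κ / 4) ^ γ₁) (c * (κ / 4) ^ (γ₁ - 1) / 2)) * M ^ γ₁
        ≤ ENNReal.ofReal ((κ / 4) ^ γ₁) * M ^ γ₁ := by gcongr; exact min_le_left _ _
      _ = L ^ γ₁ := by
          rw [ENNReal.mul_rpow_of_nonneg _ _ (by linarith),
            ENNReal.ofReal_rpow_of_nonneg hκ4.le (by linarith)]
      _ ≤ ν₁ (Ioi s) := hbig
  have hroot : ν₁ (Ioi s) ^ γ₁⁻¹ ≤ L := by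
    simpa [← ENNReal.rpow_mul, mul_inv_cancel₀ (by linarith : γ₁ ≠ 0)] using
      ENNReal.rpow_le_rpow hsmall.le (inv_nonneg.2 (by linarith : (0 : ℝ) ≤ γ₁))
  have hLL : L + L = ENNReal.ofReal κ * (M / 2) := by
    rw [← add_mul, ← ENNReal.ofReal_add hκ4.le hκ4.le, show κ / 4 + κ / 4 = κ / 2 by ring,
      ENNReal.ofReal_div_of_pos two_pos, ENNReal.ofReal_ofNat]
    simp only [div_eq_mul_inv]
    ring
  obtain ⟨r₀, hr₀, hhalf⟩ := exists_half_measure_Ioc_le μ s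
  have hν₂ : ∀ r ∈ Ioo s r₀, L ^ γ₂ ≤ ν₂ (Ioi r) := fun r hr =>
    rpow_le_measure_Ioi_of_add_le_tailRootSum hL (by linarith)
      ((ENNReal.rpow_le_rpow (measure_mono (Ioi_subset_Ioi hr.1.le)) (by positivity)).trans hroot)
      (calc L + L ≤ ENNReal.ofReal κ * μ (Ioi r) := by rw [hLL]; gcongr; exact hhalf r hr.2
        _ ≤ tailRootSum ν₁ ν₂ γ₁ γ₂ r :=
            const_mul_measure_Ioi_le_tailRootSum h₁ h₂ hc.le hθ₁ hθ₁' hθ₂ hθ₂' hγ₁ hγ₂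
              hpos₁ hpos₂ r)
  have hdrop : ENNReal.ofReal c * (L ^ γ₂) ^ θ₁ * μ (Ioc s r₀) ≤ ν₁ (Ioc s r₀) :=
    const_mul_rpow_mul_measure_le h₁ hθ₁ measurableSet_Ioc <| by
      filter_upwards [Measure.ae_ne μ r₀] with r hr hrS
      exact hν₂ r ⟨hrS.1, lt_of_le_of_ne hrS.2 hr⟩
  calc ENNReal.ofReal (min ((κ / 4) ^ γ₁) (c * (κ / 4) ^ (γ₁ - 1) / 2)) * M ^ γ₁
      ≤ ENNReal.ofReal (c * (κ / 4) ^ (γ₁ - 1) / 2) * M ^ γ₁ := by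
        gcongr; exact min_le_right _ _
    _ = ENNReal.ofReal c * (L ^ γ₂) ^ θ₁ * (M / 2) := by
        rw [← ENNReal.rpow_mul, show γ₂ * θ₁ = γ₁ - 1 by rw [hγ₁]; ring]
        exact ENNReal.ofReal_mul_rpow_sub_one_div_two_mul_rpow hc.le hκ4.le hγ₁1 M
    _ ≤ ENNReal.ofReal c * (L ^ γ₂) ^ θ₁ * μ (Ioc s r₀) := by gcongr
    _ ≤ ν₁ (Ioi s) := hdrop.trans (measure_mono Ioc_subset_Ioi_self)

theorem setLIntegral_Ioi_comp_mul_left {f : ℝ → ℝ≥0∞} (hf : Measurable f) {a : ℝ} (ha : 0 < a)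
    (t : ℝ) : ∫⁻ r in Ioi t, f (a * r) = ENNReal.ofReal a⁻¹ * ∫⁻ s in Ioi (a * t), f s := by
  have hmul : Measurable fun r : ℝ => a * r := measurable_const_mul a
  have hpre : (fun r : ℝ => a * r) ⁻¹' Ioi (a * t) = Ioi t := by
    ext r
    simp [mul_lt_mul_iff_right₀ ha]
  calc ∫⁻ r in Ioi t, f (a * r)
      = ∫⁻ s, f s ∂(Measure.map (fun r => a * r) (volume.restrict (Ioi t))) :=
        (lintegral_map hf hmul).symm
    _ = ∫⁻ s, f s ∂((Measure.map (fun r => a * r) volume).restrict (Ioi (a * t))) := by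
        rw [Measure.restrict_map hmul measurableSet_Ioi, hpre]
    _ = ENNReal.ofReal a⁻¹ * ∫⁻ s in Ioi (a * t), f s := by
        rw [Real.map_volume_mul_left ha.ne', Measure.restrict_smul, lintegral_smul_measure,
          abs_of_pos (inv_pos.2 ha), smul_eq_mul]

section Wolff

variable {n : ℕ} {α p : ℝ}

def wolffDensity (n : ℕ) (α p : ℝ) (μ : Measure (Rn n)) (x : Rn n) (r : ℝ) : ℝ≥0∞ :=
  (μ (ball x r) / ENNReal.ofReal (r ^ ((n : ℝ) - α * p))) ^ (1 / (p - 1)) *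
    ENNReal.ofReal (1 / r)

/-- The measure of total mass `wolff n α p μ x` whose tail `(Ioi t)` is the Wolff potential
truncated below at scale `t`. -/
def wolffMeasure (n : ℕ) (α p : ℝ) (μ : Measure (Rn n)) (x : Rn n) : Measure ℝ :=
  (volume.restrict (Ioi 0)).withDensity (wolffDensity n α p μ x)

instance (μ : Measure (Rn n)) (x : Rn n) : NullSingletonClass (wolffMeasure n α p μ x) := by
  unfold wolffMeasure
  infer_instance

/-- `2^{-(n-αp)/(p-1)}`, the cost of halving the radius in the Wolff integrand. -/
def wolffConst (n : ℕ) (α p : ℝ) : ℝ :=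
  ((2 : ℝ) ^ ((n : ℝ) - α * p))⁻¹ ^ (1 / (p - 1))

theorem wolffConst_pos : 0 < wolffConst n α p := by
  unfold wolffConst
  positivity

theorem measurable_wolffDensity (μ : Measure (Rn n)) (x : Rn n) :
    Measurable (wolffDensity n α p μ x) :=
  ((Monotone.measurable fun _ _ h => measure_mono (ball_subset_ball h)).div
    (measurable_id.pow_const _).ennreal_ofReal |>.pow_const _).mul
    (measurable_const.div measurable_id).ennreal_ofReal

theorem wolffMeasure_apply_of_subset {μ : Measure (Rn n)} {x : Rn n} {S : Set ℝ}
    (hS : MeasurableSet S) (hS0 : S ⊆ Ioi 0) :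
    wolffMeasure n α p μ x S = ∫⁻ r in S, wolffDensity n α p μ x r := by
  rw [wolffMeasure, withDensity_apply _ hS, Measure.restrict_restrict hS, inter_eq_left.2 hS0]

theorem wolff_eq_wolffMeasure_Ioi (μ : Measure (Rn n)) (x : Rn n) :
    wolff n α p μ x = wolffMeasure n α p μ x (Ioi 0) :=
  (wolffMeasure_apply_of_subset measurableSet_Ioi subset_rfl).symm

theorem wolffConst_div_two_mul_wolffDensity_le (hp : 1 < p) (μ : Measure (Rn n)) {x y : Rn n}
    {s : ℝ} (hs : 0 < s) (hxy : ball x (2⁻¹ * s) ⊆ ball y s) :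
    ENNReal.ofReal (wolffConst n α p / 2) * wolffDensity n α p μ x (2⁻¹ * s)
      ≤ wolffDensity n α p μ y s := by
  set m := (n : ℝ) - α * p
  have ha : 0 ≤ 1 / (p - 1) := by
    have : 0 < p - 1 := by linarith
    positivity
  have hD : ENNReal.ofReal (s ^ m)
      = ENNReal.ofReal (2 ^ m) * ENNReal.ofReal ((2⁻¹ * s) ^ m) := by
    rw [← ENNReal.ofReal_mul (by positivity), ← Real.mul_rpow (by norm_num) (by positivity),
      mul_inv_cancel_left₀ two_ne_zero]
  have hC : ENNReal.ofReal (wolffConst n α p) = (ENNReal.ofReal (2 ^ m))⁻¹ ^ (1 / (p - 1)) := by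
    rw [wolffConst, ← ENNReal.ofReal_rpow_of_nonneg (by positivity) ha,
      ENNReal.ofReal_inv_of_pos (by positivity)]
  have hr : ENNReal.ofReal 2⁻¹ * ENNReal.ofReal (1 / (2⁻¹ * s)) = ENNReal.ofReal (1 / s) := by
    rw [← ENNReal.ofReal_mul (by norm_num)]
    congr 1
    field_simp
  have hratio : ∀ B : ℝ≥0∞, B / ENNReal.ofReal (s ^ m)
      = (ENNReal.ofReal (2 ^ m))⁻¹ * (B / ENNReal.ofReal ((2⁻¹ * s) ^ m)) := fun B => by
    rw [hD, div_eq_mul_inv, div_eq_mul_inv,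
      ENNReal.mul_inv (Or.inr ENNReal.ofReal_ne_top) (Or.inl ENNReal.ofReal_ne_top)]
    ring
  calc ENNReal.ofReal (wolffConst n α p / 2) * wolffDensity n α p μ x (2⁻¹ * s)
      = (μ (ball x (2⁻¹ * s)) / ENNReal.ofReal (s ^ m)) ^ (1 / (p - 1)) *
          ENNReal.ofReal (1 / s) := by
        rw [wolffDensity, div_eq_mul_inv (wolffConst n α p), ENNReal.ofReal_mul wolffConst_pos.le,
          hratio, ENNReal.mul_rpow_of_nonneg _ _ ha, hC, ← hr]
        ring
    _ ≤ wolffDensity n α p μ y s := by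
        unfold wolffDensity
        gcongr

/-- `B(x, s/2) ⊆ B(y, s)` for `s > 2t`, and `dr/r` is invariant under `r ↦ 2r`. -/
theorem wolffConst_mul_wolffMeasure_Ioi_le (hp : 1 < p) (μ : Measure (Rn n)) {x y : Rn n}
    {t : ℝ} (ht : 0 < t) (hy : y ∈ ball x t) :
    ENNReal.ofReal (wolffConst n α p) * wolffMeasure n α p μ x (Ioi t) ≤ wolff n α p μ y := by
  set g := wolffDensity n α p μ x
  have hg := measurable_wolffDensity (n := n) (α := α) (p := p) μ x
  have hdil : ∫⁻ s in Ioi (2 * t), g (2⁻¹ * s) = ENNReal.ofReal 2 * ∫⁻ r in Ioi t, g r := by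
    rw [setLIntegral_Ioi_comp_mul_left hg (by norm_num : (0 : ℝ) < 2⁻¹), inv_inv,
      inv_mul_cancel_left₀ two_ne_zero]
  calc ENNReal.ofReal (wolffConst n α p) * wolffMeasure n α p μ x (Ioi t)
      = ENNReal.ofReal (wolffConst n α p / 2) * (ENNReal.ofReal 2 * ∫⁻ r in Ioi t, g r) := by
        rw [wolffMeasure_apply_of_subset measurableSet_Ioi (Ioi_subset_Ioi ht.le), ← mul_assoc,
          ← ENNReal.ofReal_mul (div_nonneg wolffConst_pos.le zero_le_two),
          div_mul_cancel₀ _ two_ne_zero]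
    _ = ∫⁻ s in Ioi (2 * t), ENNReal.ofReal (wolffConst n α p / 2) * g (2⁻¹ * s) := by
        rw [← hdil, lintegral_const_mul' _ _ ENNReal.ofReal_ne_top]
    _ ≤ ∫⁻ s in Ioi (2 * t), wolffDensity n α p μ y s := by
        refine setLIntegral_mono (measurable_wolffDensity μ y) fun s hs => ?_
        refine wolffConst_div_two_mul_wolffDensity_le hp μ (by linarith [mem_Ioi.1 hs])
          fun z hz => ?_
        rw [mem_ball] at hz hy ⊢
        calc dist z y ≤ dist z x + dist x y := dist_triangle _ _ _
          _ < 2⁻¹ * s + t := add_lt_add hz (by rwa [dist_comm])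
          _ < s := by linarith [mem_Ioi.1 hs]
    _ ≤ wolff n α p μ y := by
        rw [wolff_eq_wolffMeasure_Ioi, wolffMeasure_apply_of_subset measurableSet_Ioi subset_rfl]
        exact lintegral_mono_set (Ioi_subset_Ioi (by linarith))

theorem rpow_mul_measure_ball_le_withDensity (hp : 1 < p) {q : ℝ} (hq : 0 ≤ q)
    {σ ω : Measure (Rn n)} {f : Rn n → ℝ≥0∞} (hf : ∀ᵐ y ∂σ, wolff n α p ω y ≤ f y) (x : Rn n)
    {r : ℝ} (hr : 0 < r) :
    (ENNReal.ofReal (wolffConst n α p) * wolffMeasure n α p ω x (Ioi r)) ^ q * σ (ball x r)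
      ≤ σ.withDensity (fun y => f y ^ q) (ball x r) := by
  rw [withDensity_apply _ measurableSet_ball, ← setLIntegral_const]
  refine setLIntegral_mono_ae' measurableSet_ball ?_
  filter_upwards [hf] with y hfy hy
  exact ENNReal.rpow_le_rpow ((wolffConst_mul_wolffMeasure_Ioi_le hp ω hr hy).trans hfy) hq

theorem wolffDensity_mul_le_wolffDensity_withDensity (hp : 1 < p) {q : ℝ} (hq : 0 ≤ q)
    {σ ω : Measure (Rn n)} {f : Rn n → ℝ≥0∞} (hf : ∀ᵐ y ∂σ, wolff n α p ω y ≤ f y) (x : Rn n)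
    {r : ℝ} (hr : 0 < r) :
    ENNReal.ofReal (wolffConst n α p ^ (q / (p - 1))) *
        (wolffDensity n α p σ x r * wolffMeasure n α p ω x (Ioi r) ^ (q / (p - 1)))
      ≤ wolffDensity n α p (σ.withDensity fun y => f y ^ q) x r := by
  have ha : 0 ≤ 1 / (p - 1) := by
    have : 0 < p - 1 := by linarith
    positivity
  set K := ENNReal.ofReal (wolffConst n α p) * wolffMeasure n α p ω x (Ioi r)
  have hK : ENNReal.ofReal (wolffConst n α p ^ (q / (p - 1))) *
      wolffMeasure n α p ω x (Ioi r) ^ (q / (p - 1)) = (K ^ q) ^ (1 / (p - 1)) := by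
    rw [← ENNReal.rpow_mul, mul_one_div, ENNReal.mul_rpow_of_nonneg _ _ (by positivity),
      ENNReal.ofReal_rpow_of_nonneg wolffConst_pos.le (by positivity)]
  calc ENNReal.ofReal (wolffConst n α p ^ (q / (p - 1))) *
        (wolffDensity n α p σ x r * wolffMeasure n α p ω x (Ioi r) ^ (q / (p - 1)))
      = (K ^ q * σ (ball x r) / ENNReal.ofReal (r ^ ((n : ℝ) - α * p))) ^ (1 / (p - 1)) *
          ENNReal.ofReal (1 / r) := by
        rw [wolffDensity, mul_div_assoc, ENNReal.mul_rpow_of_nonneg _ _ ha, ← hK]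
        ring
    _ ≤ wolffDensity n α p (σ.withDensity fun y => f y ^ q) x r := by
        unfold wolffDensity
        gcongr
        exact rpow_mul_measure_ball_le_withDensity hp hq hf x hr

theorem smul_withDensity_wolffMeasure_le (hp : 1 < p) {q : ℝ} (hq : 0 ≤ q)
    {σ ω : Measure (Rn n)} {f : Rn n → ℝ≥0∞} (hf : ∀ᵐ y ∂σ, wolff n α p ω y ≤ f y) (x : Rn n) :
    ENNReal.ofReal (wolffConst n α p ^ (q / (p - 1))) •
        (wolffMeasure n α p σ x).withDensity
          (fun r => wolffMeasure n α p ω x (Ioi r) ^ (q / (p - 1)))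
      ≤ wolffMeasure n α p (σ.withDensity fun y => f y ^ q) x := by
  have htail : Measurable fun r => wolffMeasure n α p ω x (Ioi r) ^ (q / (p - 1)) :=
    (Antitone.measurable fun _ _ h => measure_mono (Ioi_subset_Ioi h)).pow_const _
  rw [show wolffMeasure n α p σ x =
      (volume.restrict (Ioi 0)).withDensity (wolffDensity n α p σ x) from rfl,
    ← withDensity_mul _ (measurable_wolffDensity σ x) htail,
    ← withDensity_smul _ ((measurable_wolffDensity σ x).mul htail)]
  refine withDensity_mono ?_
  filter_upwards [ae_restrict_mem measurableSet_Ioi] with r hr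
  exact wolffDensity_mul_le_wolffDensity_withDensity hp hq hf x hr

theorem smul_restrict_withDensity_wolffMeasure_le (hp : 1 < p) {q : ℝ} (hq : 0 ≤ q)
    {σ ω : Measure (Rn n)} {f : Rn n → ℝ≥0∞} (hf : ∀ᵐ y ∂σ, wolff n α p ω y ≤ f y) (x : Rn n)
    {c : ℝ} (hc : c ≤ wolffConst n α p ^ (q / (p - 1))) {S : Set ℝ} (hS : MeasurableSet S) :
    ENNReal.ofReal c • ((wolffMeasure n α p σ x).restrict S).withDensity
        (fun r => wolffMeasure n α p ω x (Ioi r) ^ (q / (p - 1)))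
      ≤ wolffMeasure n α p (σ.withDensity fun y => f y ^ q) x := by
  refine le_trans ?_ (smul_withDensity_wolffMeasure_le hp hq hf x)
  rw [← restrict_withDensity hS]
  gcongr
  exact Measure.restrict_le_self

theorem wolffMeasure_Ioi_ne_zero (hp : 1 < p) {μ : Measure (Rn n)} (hμ : μ ≠ 0) (x : Rn n)
    (t : ℝ) : wolffMeasure n α p μ x (Ioi t) ≠ 0 := by
  obtain ⟨R, hR⟩ : ∃ R : ℕ, μ (ball x R) ≠ 0 := by
    by_contra! h
    exact hμ (Measure.measure_univ_eq_zero.1 (by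
      rw [← iUnion_ball_nat x]
      exact measure_iUnion_null h))
  set R' := max (R : ℝ) (max t 0)
  have hR' : Ioi R' ⊆ Ioi 0 := Ioi_subset_Ioi ((le_max_right _ _).trans (le_max_right _ _))
  have hpos : Ioi R' ⊆ Function.support (wolffDensity n α p μ x) := by
    intro r hr
    refine mul_ne_zero ?_ (by simpa using hR' hr)
    rw [Ne, ENNReal.rpow_eq_zero_iff, not_or]
    refine ⟨fun h => ?_, fun h => ?_⟩
    · refine hR (measure_mono_null (ball_subset_ball (le_max_left _ _ |>.trans hr.le)) ?_)
      simpa using h.1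
    · have : 0 < p - 1 := by linarith
      exact (one_div_pos.2 this).not_gt h.2
  intro h0
  have hlt : 0 < wolffMeasure n α p μ x (Ioi R') := by
    rw [wolffMeasure_apply_of_subset measurableSet_Ioi hR',
      setLIntegral_pos_iff (measurable_wolffDensity μ x), inter_eq_right.2 hpos, Real.volume_Ioi]
    exact ENNReal.zero_lt_top
  exact hlt.ne' (measure_mono_null (Ioi_subset_Ioi ((le_max_left _ _).trans (le_max_right _ _))) h0)

theorem wolffMeasure_Ioc_ne_top (hp : 1 < p) (hm : 0 ≤ (n : ℝ) - α * p) (σ : Measure (Rn n))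
    [IsLocallyFiniteMeasure σ] (x : Rn n) {s t : ℝ} (hs : 0 < s) :
    wolffMeasure n α p σ x (Ioc s t) ≠ ∞ := by
  have ha : 0 ≤ 1 / (p - 1) := by
    have : 0 < p - 1 := by linarith
    positivity
  set K := (σ (ball x t) / ENNReal.ofReal (s ^ ((n : ℝ) - α * p))) ^ (1 / (p - 1)) *
    ENNReal.ofReal (1 / s) with hKdef
  have hK : K ≠ ∞ := ENNReal.mul_ne_top (ENNReal.rpow_ne_top_of_nonneg ha
    (ENNReal.div_ne_top measure_ball_lt_top.ne (by simpa using Real.rpow_pos_of_pos hs _)))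
    ENNReal.ofReal_ne_top
  have hvol : volume (Ioc s t) ≠ ∞ := by simp [Real.volume_Ioc]
  refine ne_top_of_le_ne_top (ENNReal.mul_ne_top hK hvol) ?_
  rw [wolffMeasure_apply_of_subset measurableSet_Ioc fun r hr => hs.trans hr.1,
    ← setLIntegral_const]
  refine setLIntegral_mono measurable_const fun r hr => ?_
  rw [hKdef, wolffDensity]
  gcongr
  · exact hr.2
  · exact hr.1.le
  · exact hr.1.le

theorem withDensity_rpow_ne_zero {X : Type*} [MeasurableSpace X] {σ : Measure X} {f : X → ℝ≥0∞}
    (hf : Measurable f) (hf0 : ¬ ∀ᵐ y ∂σ, f y = 0) {q : ℝ} (hq : 0 < q) :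
    σ.withDensity (fun y => f y ^ q) ≠ 0 := by
  rw [Ne, withDensity_eq_zero_iff (hf.pow_const q).aemeasurable]
  refine fun h => hf0 ?_
  filter_upwards [h] with y hy
  simpa [ENNReal.rpow_eq_zero_iff, hq, hq.not_gt] using hy

end Wolff

theorem gamma1_eq {p q₁ q₂ : ℝ} (hp : p - 1 ≠ 0) (hD : (p - 1) ^ 2 - q₁ * q₂ ≠ 0) :
    gamma1 p q₁ q₂ = 1 + q₁ / (p - 1) * gamma2 p q₁ q₂ := by
  unfold gamma1 gamma2
  rw [div_mul_div_comm, mul_left_comm, mul_div_mul_left _ _ hp, one_add_div hD]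
  congr 1
  ring

theorem gamma2_eq {p q₁ q₂ : ℝ} (hp : p - 1 ≠ 0) (hD : (p - 1) ^ 2 - q₁ * q₂ ≠ 0) :
    gamma2 p q₁ q₂ = 1 + q₂ / (p - 1) * gamma1 p q₁ q₂ := by
  unfold gamma1 gamma2
  rw [div_mul_div_comm, mul_left_comm, mul_div_mul_left _ _ hp, one_add_div hD]
  congr 1
  ring

theorem exists_pos_forall_const_mul_wolff_rpow_le {n : ℕ} {α p q₁ q₂ γ₁ γ₂ : ℝ} (hp : 1 < p)
    (hm : 0 ≤ (n : ℝ) - α * p) (hq₁ : 0 < q₁) (hq₁' : q₁ ≤ p - 1) (hq₂ : 0 < q₂)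
    (hq₂' : q₂ ≤ p - 1) (hγ₁ : γ₁ = 1 + q₁ / (p - 1) * γ₂) (hγ₂ : γ₂ = 1 + q₂ / (p - 1) * γ₁) :
    ∃ c > 0, ∀ (σ : Measure (Rn n)) [IsLocallyFiniteMeasure σ] (u v : Rn n → ℝ≥0∞),
      Measurable u → Measurable v → ¬ (∀ᵐ y ∂σ, u y = 0) → ¬ (∀ᵐ y ∂σ, v y = 0) →
      (∀ᵐ y ∂σ, wolff n α p (σ.withDensity fun y => v y ^ q₁) y ≤ u y) →
      (∀ᵐ y ∂σ, wolff n α p (σ.withDensity fun y => u y ^ q₂) y ≤ v y) →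
      ∀ x, ENNReal.ofReal c * wolff n α p σ x ^ γ₁
        ≤ wolff n α p (σ.withDensity fun y => v y ^ q₁) x := by
  have hp1 : 0 < p - 1 := by linarith
  have hθ₁ : 0 < q₁ / (p - 1) := by positivity
  have hθ₂ : 0 < q₂ / (p - 1) := by positivity
  have hC := wolffConst_pos (n := n) (α := α) (p := p)
  obtain ⟨c', hc', hcore⟩ := exists_pos_forall_const_mul_measure_Ioi_rpow_le
    (lt_min (Real.rpow_pos_of_pos hC _) (Real.rpow_pos_of_pos hC _)) hθ₁.le
    ((div_le_one hp1).2 hq₁') hθ₂.le ((div_le_one hp1).2 hq₂') hγ₁ hγ₂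
  refine ⟨c', hc', fun σ _ u v hu hv hu0 hv0 hWv hWu x => ?_⟩
  have hbound : ∀ k : ℕ, ENNReal.ofReal c' *
      wolffMeasure n α p σ x (Ioc ((k : ℝ) + 1)⁻¹ ((k : ℝ) + 1)) ^ γ₁
        ≤ wolff n α p (σ.withDensity fun y => v y ^ q₁) x := fun k => by
    set S := Ioc ((k : ℝ) + 1)⁻¹ ((k : ℝ) + 1)
    have : IsFiniteMeasure ((wolffMeasure n α p σ x).restrict S) :=
      isFiniteMeasure_restrict.2 (wolffMeasure_Ioc_ne_top hp hm σ x (by positivity))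
    have h := hcore ((wolffMeasure n α p σ x).restrict S) _ _
      (wolffMeasure_Ioi_ne_zero hp (withDensity_rpow_ne_zero hv hv0 hq₁) x)
      (wolffMeasure_Ioi_ne_zero hp (withDensity_rpow_ne_zero hu hu0 hq₂) x)
      (smul_restrict_withDensity_wolffMeasure_le hp hq₁.le hWu x (min_le_left _ _)
        measurableSet_Ioc)
      (smul_restrict_withDensity_wolffMeasure_le hp hq₂.le hWv x (min_le_right _ _)
        measurableSet_Ioc) 0
    have hS0 : S ⊆ Ioi 0 := fun r hr => lt_trans (by positivity) hr.1
    rwa [Measure.restrict_apply measurableSet_Ioi, inter_eq_right.2 hS0,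
      ← wolff_eq_wolffMeasure_Ioi] at h
  rw [wolff_eq_wolffMeasure_Ioi σ x]
  exact le_of_tendsto' (ENNReal.Tendsto.const_mul
    ((ENNReal.continuous_rpow_const.tendsto _).comp (tendsto_measure_Ioc_inv_nat_add_one _))
    (Or.inr ENNReal.ofReal_ne_top)) hbound

theorem supersolution_lower_bound_general (n : ℕ) (p α q₁ q₂ : ℝ)
    (hp : 1 < p) (hαn : α < (n : ℝ) / p)
    (hq₁ : 0 < q₁) (hq₁' : q₁ < p - 1) (hq₂ : 0 < q₂) (hq₂' : q₂ < p - 1) :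
    ∃ c : ℝ, 0 < c ∧
      ∀ σ : Measure (Rn n), IsLocallyFiniteMeasure σ →
        ∀ u v : Rn n → ℝ≥0∞,
          isWolffSuper n α p q₁ q₂ σ u v → nontrivialPair n σ u v →
          (∀ᵐ x ∂σ,
            ENNReal.ofReal c * (wolff n α p σ x) ^ gamma1 p q₁ q₂ ≤ u x) ∧
          (∀ᵐ x ∂σ,
            ENNReal.ofReal c * (wolff n α p σ x) ^ gamma2 p q₁ q₂ ≤ v x) := by
  have hm : 0 ≤ (n : ℝ) - α * p := by
    have := (lt_div_iff₀ (by linarith : 0 < p)).1 hαn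
    linarith
  have hp1 : p - 1 ≠ 0 := by linarith
  have hD : (p - 1) ^ 2 - q₁ * q₂ ≠ 0 := by nlinarith
  obtain ⟨c₁, hc₁, h₁⟩ := exists_pos_forall_const_mul_wolff_rpow_le hp hm hq₁ hq₁'.le hq₂
    hq₂'.le (gamma1_eq hp1 hD) (gamma2_eq hp1 hD)
  obtain ⟨c₂, hc₂, h₂⟩ := exists_pos_forall_const_mul_wolff_rpow_le hp hm hq₂ hq₂'.le hq₁
    hq₁'.le (gamma2_eq hp1 hD) (gamma1_eq hp1 hD)
  refine ⟨min c₁ c₂, lt_min hc₁ hc₂, fun σ _ u v hsuper ⟨hu0, hv0⟩ => ?_⟩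
  obtain ⟨hu, hv, -, -, hWv, hWu⟩ := hsuper
  constructor
  · filter_upwards [hWv] with x hx
    calc ENNReal.ofReal (min c₁ c₂) * wolff n α p σ x ^ gamma1 p q₁ q₂
        ≤ ENNReal.ofReal c₁ * wolff n α p σ x ^ gamma1 p q₁ q₂ := by
          gcongr; exact min_le_left _ _
      _ ≤ u x := (h₁ σ u v hu hv hu0 hv0 hWv hWu x).trans hx
  · filter_upwards [hWu] with x hx
    calc ENNReal.ofReal (min c₁ c₂) * wolff n α p σ x ^ gamma2 p q₁ q₂
        ≤ ENNReal.ofReal c₂ * wolff n α p σ x ^ gamma2 p q₁ q₂ := by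
          gcongr; exact min_le_right _ _
      _ ≤ v x := (h₂ σ v u hv hu hv0 hu0 hWu hWv x).trans hx

/-- Lemma 3.2: lower Wolff-potential bounds for nontrivial supersolutions of the
Wolff integral system. -/
theorem supersolution_lower_bound (n : ℕ) (hn : 1 ≤ n) (p α q₁ q₂ : ℝ)
    (hp : 1 < p) (hα : 0 < α) (hαn : α < (n : ℝ) / p)
    (hq₁ : 0 < q₁) (hq₁' : q₁ < p - 1) (hq₂ : 0 < q₂) (hq₂' : q₂ < p - 1) :
    ∃ c : ℝ, 0 < c ∧
      ∀ σ : Measure (Rn n), IsLocallyFiniteMeasure σ →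
        ∀ u v : Rn n → ℝ≥0∞,
          isWolffSuper n α p q₁ q₂ σ u v → nontrivialPair n σ u v →
          (∀ᵐ x ∂σ,
            ENNReal.ofReal c * (wolff n α p σ x) ^ gamma1 p q₁ q₂ ≤ u x) ∧
          (∀ᵐ x ∂σ,
            ENNReal.ofReal c * (wolff n α p σ x) ^ gamma2 p q₁ q₂ ≤ v x) :=
  supersolution_lower_bound_general n p α q₁ q₂ hp hαn hq₁ hq₁' hq₂ hq₂'
end
end

section
/- Let n ≥ 1, 1 < p < ∞, 0 < q₁ < p−1, 0 < q₂ < p−1, 0 < α < n/p, and let σ be a nonnegative Radon measure on ℝⁿ. Suppose κ > 0 is a constant such that for every r > 0 and every x ∈ ℝⁿ one has W_{α,p}((W_{α,p}σ)^r dσ)(x) ≥ κ^{r/(p−1)} (W_{α,p}σ(x))^{r/(p−1)+1}. Let w : ℝⁿ → [0,∞] be a σ-measurable function and suppose that for some constants c > 0 and δ > 0 one has w(y) ≥ c (W_{α,p}σ(y))^{δ} for σ-a.e. y ∈ ℝⁿ. Then for every x ∈ ℝⁿ at which w(x) ≥ W_{α,p}((W_{α,p}(w^{q₂} dσ))^{q₁}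 dσ)(x) holds, one has w(x) ≥ c^{q₁q₂/(p−1)²} · κ^{q₁(p−1+2q₂δ)/(p−1)²} · (W_{α,p}σ(x))^{(q₁/(p−1))((q₂/(p−1))δ+1)+1}. -/
open MeasureTheory Metric Set ENNReal

noncomputable section

/-!
Each application of `W_{α,p}` upgrades a lower bound `C · (Wσ)^r ≤ f` (σ-a.e.) into the bound
`C^{1/(p−1)} κ^{r/(p−1)} (Wσ)^{r/(p−1)+1} ≤ W_{α,p}(f dσ)`: the Wolff potential is monotone in the
density and `1/(p−1)`-homogeneous, and the hypothesis on `σ` controls `W_{α,p}((Wσ)^r dσ)`.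
Starting from `w ≥ c (Wσ)^δ`, raising to the power `q₂`, applying `W`, raising to the power `q₁`
and applying `W` again gives the claimed bound on `w(x)`.
-/

namespace ENNReal

theorem mul_rpow_mul_le_rpow_of_mul_rpow_le {a b c : ℝ≥0∞} {r q : ℝ} (h : a * b ^ r ≤ c)
    (hq : 0 ≤ q) : a ^ q * b ^ (r * q) ≤ c ^ q := by
  rw [rpow_mul, ← mul_rpow_of_nonneg _ _ hq]
  exact rpow_le_rpow h hq

end ENNReal

def WolffPowerLowerBound (n : ℕ) (α p : ℝ) (σ : Measure (Rn n)) (K : ℝ≥0∞) : Prop :=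
  ∀ r : ℝ, 0 < r → ∀ x : Rn n,
    K ^ (r / (p - 1)) * wolff n α p σ x ^ (r / (p - 1) + 1) ≤
      wolff n α p (σ.withDensity fun y => wolff n α p σ y ^ r) x

section Wolff

variable {n : ℕ} {α p : ℝ} {σ : Measure (Rn n)}

theorem wolff_withDensity_mono (hp : 1 < p) {f g : Rn n → ℝ≥0∞} (h : f ≤ᵐ[σ] g) (x : Rn n) :
    wolff n α p (σ.withDensity f) x ≤ wolff n α p (σ.withDensity g) x := by
  refine lintegral_mono fun t =>
    mul_le_mul_left (rpow_le_rpow (ENNReal.div_le_div_right ?_ _) ?_) _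
  · rw [withDensity_apply _ measurableSet_ball, withDensity_apply _ measurableSet_ball]
    exact lintegral_mono_ae (ae_restrict_of_ae h)
  · exact one_div_nonneg.2 (sub_nonneg.2 hp.le)

theorem wolff_withDensity_const_mul (hp : 1 < p) (f : Rn n → ℝ≥0∞) {k : ℝ≥0∞} (hk : k ≠ ∞)
    (x : Rn n) :
    wolff n α p (σ.withDensity fun y => k * f y) x
      = k ^ (1 / (p - 1)) * wolff n α p (σ.withDensity f) x := by
  have he : 0 ≤ 1 / (p - 1) := one_div_nonneg.2 (sub_nonneg.2 hp.le)
  unfold wolff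
  rw [show σ.withDensity (fun y => k * f y) = k • σ.withDensity f from withDensity_smul' k f hk,
    ← lintegral_const_mul' _ _ (rpow_ne_top_of_nonneg he hk)]
  refine lintegral_congr fun t => ?_
  rw [Measure.smul_apply, smul_eq_mul, mul_div_assoc, mul_rpow_of_nonneg _ _ he, mul_assoc]

theorem WolffPowerLowerBound.le_wolff_withDensity {K : ℝ≥0∞}
    (hK : WolffPowerLowerBound n α p σ K) (hp : 1 < p) {C : ℝ≥0∞} (hC : C ≠ ∞) {r : ℝ}
    (hr : 0 < r) {f : Rn n → ℝ≥0∞} (hf : ∀ᵐ y ∂σ, C * wolff n α p σ y ^ r ≤ f y) (x : Rn n) :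
    C ^ (1 / (p - 1)) * K ^ (r / (p - 1)) * wolff n α p σ x ^ (r / (p - 1) + 1) ≤
      wolff n α p (σ.withDensity f) x :=
  calc C ^ (1 / (p - 1)) * K ^ (r / (p - 1)) * wolff n α p σ x ^ (r / (p - 1) + 1)
      ≤ C ^ (1 / (p - 1)) * wolff n α p (σ.withDensity fun y => wolff n α p σ y ^ r) x := by
        rw [mul_assoc]
        exact mul_le_mul_right (hK r hr x) _
    _ = wolff n α p (σ.withDensity fun y => C * wolff n α p σ y ^ r) x :=
        (wolff_withDensity_const_mul hp _ hC x).symm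
    _ ≤ wolff n α p (σ.withDensity f) x := wolff_withDensity_mono hp hf x

end Wolff

theorem bootstrap_constant_eq {p q₁ q₂ δ : ℝ} (hp : 1 < p) (hq₁ : 0 ≤ q₁) (hq₂ : 0 ≤ q₂)
    (hδ : 0 ≤ δ) (A K b : ℝ≥0∞) :
    (((A ^ q₂) ^ (1 / (p - 1)) * K ^ (δ * q₂ / (p - 1))) ^ q₁) ^ (1 / (p - 1)) *
        K ^ ((δ * q₂ / (p - 1) + 1) * q₁ / (p - 1)) *
        b ^ ((δ * q₂ / (p - 1) + 1) * q₁ / (p - 1) + 1) =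
      A ^ (q₁ * q₂ / (p - 1) ^ 2) * K ^ (q₁ * (p - 1 + 2 * q₂ * δ) / (p - 1) ^ 2) *
        b ^ ((q₁ / (p - 1)) * ((q₂ / (p - 1)) * δ + 1) + 1) := by
  have hp' : 0 < p - 1 := sub_pos.2 hp
  rw [← rpow_mul, mul_rpow_of_nonneg _ _ (by positivity), ← rpow_mul, ← rpow_mul, ← rpow_mul,
    mul_assoc (A ^ _), ← rpow_add_of_nonneg _ _ (by positivity) (by positivity)]
  congr 3
  · field_simp
  · field_simp
    ring
  · field_simp

theorem wolff_bootstrap_general (n : ℕ) (p α q₁ q₂ κ c δ : ℝ)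
    (hp : 1 < p) (hq₁ : 0 < q₁) (hq₂ : 0 < q₂) (hδ : 0 < δ) (σ : Measure (Rn n))
    (hκσ : ∀ (r : ℝ), 0 < r → ∀ x : Rn n,
      ENNReal.ofReal κ ^ (r / (p - 1)) * (wolff n α p σ x) ^ (r / (p - 1) + 1) ≤
        wolff n α p (σ.withDensity fun y => (wolff n α p σ y) ^ r) x)
    (w : Rn n → ℝ≥0∞)
    (hlow : ∀ᵐ y ∂σ, ENNReal.ofReal c * (wolff n α p σ y) ^ δ ≤ w y) :
    ∀ x : Rn n,
      wolff n α p (σ.withDensity fun y =>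
        (wolff n α p (σ.withDensity fun z => w z ^ q₂) y) ^ q₁) x ≤ w x →
      ENNReal.ofReal c ^ (q₁ * q₂ / (p - 1) ^ 2) *
        ENNReal.ofReal κ ^ (q₁ * (p - 1 + 2 * q₂ * δ) / (p - 1) ^ 2) *
        (wolff n α p σ x) ^ ((q₁ / (p - 1)) * ((q₂ / (p - 1)) * δ + 1) + 1) ≤ w x := by
  intro x hx
  have hw_q₂ : ∀ᵐ y ∂σ, ENNReal.ofReal c ^ q₂ * wolff n α p σ y ^ (δ * q₂) ≤ w y ^ q₂ :=
    hlow.mono fun y hy => mul_rpow_mul_le_rpow_of_mul_rpow_le hy hq₂.le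
  have hV := WolffPowerLowerBound.le_wolff_withDensity hκσ hp
    (rpow_ne_top_of_nonneg hq₂.le ofReal_ne_top) (by positivity) hw_q₂
  have hV_q₁ := fun y => mul_rpow_mul_le_rpow_of_mul_rpow_le (hV y) hq₁.le
  have hWV := WolffPowerLowerBound.le_wolff_withDensity hκσ hp
    (by finiteness) (by positivity) (ae_of_all _ hV_q₁) x
  rw [← bootstrap_constant_eq hp hq₁.le hq₂.le hδ.le]
  exact hWV.trans hx

/-- Claim 1 in the proof of Lemma 3.2: bootstrapping a lower bound for a function
satisfying the iterated Wolff inequality. -/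
theorem wolff_bootstrap (n : ℕ) (hn : 1 ≤ n) (p α q₁ q₂ κ c δ : ℝ)
    (hp : 1 < p) (hα : 0 < α) (hαn : α < (n : ℝ) / p)
    (hq₁ : 0 < q₁) (hq₁' : q₁ < p - 1) (hq₂ : 0 < q₂) (hq₂' : q₂ < p - 1)
    (hκ : 0 < κ) (hc : 0 < c) (hδ : 0 < δ)
    (σ : Measure (Rn n)) (hσ : IsLocallyFiniteMeasure σ)
    (hκσ : ∀ (r : ℝ), 0 < r → ∀ x : Rn n,
      ENNReal.ofReal κ ^ (r / (p - 1)) * (wolff n α p σ x) ^ (r / (p - 1) + 1) ≤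
        wolff n α p (σ.withDensity fun y => (wolff n α p σ y) ^ r) x)
    (w : Rn n → ℝ≥0∞) (hw : Measurable w)
    (hlow : ∀ᵐ y ∂σ, ENNReal.ofReal c * (wolff n α p σ y) ^ δ ≤ w y) :
    ∀ x : Rn n,
      wolff n α p (σ.withDensity fun y =>
        (wolff n α p (σ.withDensity fun z => w z ^ q₂) y) ^ q₁) x ≤ w x →
      ENNReal.ofReal c ^ (q₁ * q₂ / (p - 1) ^ 2) *
        ENNReal.ofReal κ ^ (q₁ * (p - 1 + 2 * q₂ * δ) / (p - 1) ^ 2) *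
        (wolff n α p σ x) ^ ((q₁ / (p - 1)) * ((q₂ / (p - 1)) * δ + 1) + 1) ≤ w x :=
  wolff_bootstrap_general n p α q₁ q₂ κ c δ hp hq₁ hq₂ hδ σ hκσ w hlow
end
end

section
/- Let n ≥ 1, 1 < p < ∞, 0 < q₁ < p−1, 0 < q₂ < p−1, 0 < α < n/p, and let σ be a nonnegative Radon measure on ℝⁿ satisfying condition (F) and condition (W_λ) for some λ > 0. Then there exists λ₂ > 0 depending only on p, q₁, q₂ and λ such that the functions ū = λ₂ (W_{α,p}σ + (W_{α,p}σ)^{γ₁}) and v̄ = λ₂ (W_{α,p}σ + (W_{α,p}σ)^{γ₂}) satisfy ū(x) ≥ W_{α,p}(v̄^{q₁} dσ)(x) and v̄(x) ≥ W_{α,p}(ū^{q₂} dσ)(x) for Lebesgue-a.e. x ∈ ℝⁿ. -/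
open MeasureTheory Metric Set ENNReal

noncomputable section

/-! The Wolff potential is monotone in the measure, homogeneous of degree `r = 1/(p-1)` and
quasi-additive with constant `2^r`. Since `γ ≥ 1`, the density `(λ₂(W + W^γ))^q` is at most
`(2λ₂)^q (1 + 2 W^{γq})`, so by (W_λ) the potential of the new pair is bounded by
`λ₂^{qr} B (W + W^{γ'})` with `B` independent of `λ₂`. As `qr < 1`, any large `λ₂` absorbs
`λ₂^{qr} B`. -/

open Filter

lemma one_le_gamma1 {p q₁ q₂ : ℝ} (hp : 1 ≤ p) (hq₁ : 0 ≤ q₁) (hq₂ : 0 ≤ q₂)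
    (hq : q₁ * q₂ < (p - 1) ^ 2) : 1 ≤ gamma1 p q₁ q₂ := by
  rw [gamma1, le_div_iff₀ (sub_pos.2 hq)]
  nlinarith [mul_nonneg (sub_nonneg.2 hp) hq₁, mul_nonneg hq₁ hq₂]

lemma gamma2_eq_gamma1 (p q₁ q₂ : ℝ) : gamma2 p q₁ q₂ = gamma1 p q₂ q₁ := by
  rw [gamma2, gamma1, mul_comm q₁]

lemma ENNReal.eventually_ofReal_rpow_mul_le_ofReal {s : ℝ} (hs : s < 1) {b : ℝ≥0∞}
    (hb : b ≠ ∞) : ∀ᶠ l : ℝ in atTop, ENNReal.ofReal l ^ s * b ≤ ENNReal.ofReal l := by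
  have hlarge : ∀ᶠ l : ℝ in atTop, b.toReal ≤ l ^ (1 - s) :=
    (tendsto_rpow_atTop (sub_pos.2 hs)).eventually_ge_atTop _
  filter_upwards [hlarge, eventually_gt_atTop 0] with l hbl hl
  rw [ENNReal.ofReal_rpow_of_pos hl, ← ENNReal.ofReal_toReal hb,
    ← ENNReal.ofReal_mul (by positivity)]
  refine ENNReal.ofReal_le_ofReal ?_
  calc l ^ s * b.toReal ≤ l ^ s * l ^ (1 - s) := by gcongr
    _ = l := by rw [← Real.rpow_add hl, add_sub_cancel, Real.rpow_one]

lemma ENNReal.add_rpow_self_le {a : ℝ≥0∞} {γ q : ℝ} (hγ : 1 ≤ γ) (hq : 0 ≤ q) :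
    (a + a ^ γ) ^ q ≤ 2 ^ q * (1 + 2 * a ^ (γ * q)) := by
  have hsmall : a ^ q ≤ 1 + a ^ (γ * q) := by
    rcases le_total a 1 with ha | ha
    · exact (ENNReal.rpow_le_one ha hq).trans le_self_add
    · exact (ENNReal.rpow_le_rpow_of_exponent_le ha (le_mul_of_one_le_left hq hγ)).trans
        le_add_self
  calc (a + a ^ γ) ^ q ≤ 2 ^ q * (a ^ q + (a ^ γ) ^ q) :=
        ENNReal.add_rpow_le_two_rpow_mul_rpow_add_rpow _ _ hq
    _ ≤ 2 ^ q * ((1 + a ^ (γ * q)) + a ^ (γ * q)) := by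
        rw [← ENNReal.rpow_mul]; gcongr
    _ = 2 ^ q * (1 + 2 * a ^ (γ * q)) := by ring

lemma withDensity_mul_add_rpow_le {X : Type*} [MeasurableSpace X] (σ : Measure X)
    (f : X → ℝ≥0∞) {L : ℝ≥0∞} (hL : L ≠ ∞) {γ q : ℝ} (hγ : 1 ≤ γ) (hq : 0 ≤ q) :
    σ.withDensity (fun y => (L * (f y + f y ^ γ)) ^ q)
      ≤ (L ^ q * 2 ^ q) • (σ + (2 : ℝ≥0∞) • σ.withDensity fun y => f y ^ (γ * q)) := by
  have hc : L ^ q * 2 ^ q ≠ ∞ := by finiteness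
  calc σ.withDensity (fun y => (L * (f y + f y ^ γ)) ^ q)
      ≤ σ.withDensity
          ((L ^ q * 2 ^ q) • ((fun _ => 1) + (2 : ℝ≥0∞) • fun y => f y ^ (γ * q))) := by
        refine withDensity_mono (Eventually.of_forall fun y => ?_)
        simp only [Pi.smul_apply, Pi.add_apply, smul_eq_mul]
        rw [ENNReal.mul_rpow_of_nonneg _ _ hq, mul_assoc]
        gcongr
        exact ENNReal.add_rpow_self_le hγ hq
    _ = _ := by
        rw [withDensity_smul' _ _ hc, withDensity_add_left measurable_const,
          withDensity_smul' _ _ (by finiteness), withDensity_const, one_smul]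

section WolffPotential

variable {n : ℕ} {α p : ℝ}

lemma measurable_wolff_integrand (μ : Measure (Rn n)) (x : Rn n) (r β : ℝ) :
    Measurable fun t : ℝ => (μ (ball x t) / ENNReal.ofReal (t ^ β)) ^ r * ENNReal.ofReal (1 / t) :=
  (((Monotone.measurable fun _ _ hst => measure_mono (ball_subset_ball hst)).div
    (measurable_id.pow_const β).ennreal_ofReal).pow_const r).mul
    (measurable_const.div measurable_id).ennreal_ofReal

lemma wolff_mono (hp : 1 ≤ p) {μ ν : Measure (Rn n)} (h : μ ≤ ν) (x : Rn n) :
    wolff n α p μ x ≤ wolff n α p ν x := by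
  unfold wolff
  gcongr

lemma wolff_smul (hp : 1 ≤ p) {c : ℝ≥0∞} (hc : c ≠ ∞) (μ : Measure (Rn n)) (x : Rn n) :
    wolff n α p (c • μ) x = c ^ (1 / (p - 1)) * wolff n α p μ x := by
  have hr : 0 ≤ 1 / (p - 1) := one_div_nonneg.2 (sub_nonneg.2 hp)
  unfold wolff
  rw [← lintegral_const_mul' _ _ (by finiteness)]
  refine lintegral_congr fun t => ?_
  rw [Measure.smul_apply, smul_eq_mul, mul_div_assoc, ENNReal.mul_rpow_of_nonneg _ _ hr,
    mul_assoc]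

lemma wolff_add_le (hp : 1 ≤ p) (μ ν : Measure (Rn n)) (x : Rn n) :
    wolff n α p (μ + ν) x ≤ 2 ^ (1 / (p - 1)) * (wolff n α p μ x + wolff n α p ν x) := by
  have hr : 0 ≤ 1 / (p - 1) := one_div_nonneg.2 (sub_nonneg.2 hp)
  unfold wolff
  rw [← lintegral_add_left (measurable_wolff_integrand _ _ _ _),
    ← lintegral_const_mul' _ _ (by finiteness)]
  refine lintegral_mono fun t => ?_
  rw [Measure.add_apply, ENNReal.add_div]
  refine (mul_le_mul_left (ENNReal.add_rpow_le_two_rpow_mul_rpow_add_rpow _ _ hr) _).trans_eq ?_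
  ring

lemma wolff_withDensity_mul_add_rpow_le (hp : 1 ≤ p) (σ : Measure (Rn n)) (f : Rn n → ℝ≥0∞)
    {L : ℝ≥0∞} (hL : L ≠ ∞) {γ q : ℝ} (hγ : 1 ≤ γ) (hq : 0 ≤ q) (x : Rn n) :
    wolff n α p (σ.withDensity fun y => (L * (f y + f y ^ γ)) ^ q) x
      ≤ L ^ (q * (1 / (p - 1))) * 2 ^ (q * (1 / (p - 1))) * 2 ^ (1 / (p - 1))
        * (wolff n α p σ x
          + 2 ^ (1 / (p - 1)) * wolff n α p (σ.withDensity fun y => f y ^ (γ * q)) x) := by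
  have hr : 0 ≤ 1 / (p - 1) := one_div_nonneg.2 (sub_nonneg.2 hp)
  calc _ ≤ wolff n α p ((L ^ q * 2 ^ q) •
          (σ + (2 : ℝ≥0∞) • σ.withDensity fun y => f y ^ (γ * q))) x :=
        wolff_mono hp (withDensity_mul_add_rpow_le σ f hL hγ hq) x
    _ ≤ (L ^ q * 2 ^ q) ^ (1 / (p - 1)) * (2 ^ (1 / (p - 1))
          * (wolff n α p σ x
            + 2 ^ (1 / (p - 1)) * wolff n α p (σ.withDensity fun y => f y ^ (γ * q)) x)) := by
        rw [wolff_smul hp (by finiteness)]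
        gcongr
        refine (wolff_add_le hp _ _ x).trans ?_
        rw [wolff_smul hp (by finiteness)]
    _ = _ := by
        rw [ENNReal.mul_rpow_of_nonneg _ _ hr, ← ENNReal.rpow_mul, ← ENNReal.rpow_mul]
        ring

lemma wolff_withDensity_le_of_wolff_rpow_le (hp : 1 ≤ p)
    (σ : Measure (Rn n)) {L Λ : ℝ≥0∞} (hL : L ≠ ∞) {γ γ' q : ℝ} (hγ : 1 ≤ γ) (hq : 0 ≤ q)
    {x : Rn n}
    (hW : wolff n α p (σ.withDensity fun y => wolff n α p σ y ^ (γ * q)) x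
      ≤ Λ * (wolff n α p σ x + wolff n α p σ x ^ γ')) :
    wolff n α p (σ.withDensity fun y =>
        (L * (wolff n α p σ y + wolff n α p σ y ^ γ)) ^ q) x
      ≤ L ^ (q * (1 / (p - 1)))
          * (2 ^ (q * (1 / (p - 1))) * 2 ^ (1 / (p - 1)) * (1 + 2 ^ (1 / (p - 1)) * Λ))
          * (wolff n α p σ x + wolff n α p σ x ^ γ') := by
  set W := wolff n α p σ x
  calc _ ≤ L ^ (q * (1 / (p - 1))) * 2 ^ (q * (1 / (p - 1))) * 2 ^ (1 / (p - 1))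
          * ((W + W ^ γ') + 2 ^ (1 / (p - 1)) * (Λ * (W + W ^ γ'))) := by
        refine (wolff_withDensity_mul_add_rpow_le hp σ _ hL hγ hq x).trans ?_
        gcongr
        exact le_self_add
    _ = _ := by ring

end WolffPotential

theorem wolff_supersolution_weaker_general (p q₁ q₂ lam : ℝ)
    (hq₁ : 0 < q₁) (hq₁' : q₁ < p - 1)
    (hq₂ : 0 < q₂) (hq₂' : q₂ < p - 1) :
    ∃ lam₂ : ℝ, 0 < lam₂ ∧
      ∀ (n : ℕ), 1 ≤ n →
        ∀ α : ℝ, 0 < α → α < (n : ℝ) / p →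
          ∀ σ : Measure (Rn n), IsLocallyFiniteMeasure σ →
            condF n α p σ → condW n α p q₁ q₂ lam σ →
            ∀ᵐ x ∂(volume : Measure (Rn n)),
              (wolff n α p (σ.withDensity fun y =>
                (ENNReal.ofReal lam₂ *
                  (wolff n α p σ y + (wolff n α p σ y) ^ gamma2 p q₁ q₂)) ^ q₁) x ≤
                ENNReal.ofReal lam₂ *
                  (wolff n α p σ x + (wolff n α p σ x) ^ gamma1 p q₁ q₂)) ∧
              (wolff n α p (σ.withDensity fun y =>
                (ENNReal.ofReal lam₂ *
                  (wolff n α p σ y + (wolff n α p σ y) ^ gamma1 p q₁ q₂)) ^ q₂) x ≤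
                ENNReal.ofReal lam₂ *
                  (wolff n α p σ x + (wolff n α p σ x) ^ gamma2 p q₁ q₂)) := by
  have hp : 1 ≤ p := by linarith
  have hq : q₁ * q₂ < (p - 1) ^ 2 := by nlinarith
  have hconst : ∀ q, q < p - 1 → ∀ᶠ l : ℝ in atTop,
      ENNReal.ofReal l ^ (q * (1 / (p - 1))) * (2 ^ (q * (1 / (p - 1))) * 2 ^ (1 / (p - 1))
        * (1 + 2 ^ (1 / (p - 1)) * ENNReal.ofReal lam)) ≤ ENNReal.ofReal l := fun q hq' =>
    ENNReal.eventually_ofReal_rpow_mul_le_ofReal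
      (by rw [mul_one_div, div_lt_one (by linarith)]; exact hq') (by finiteness)
  obtain ⟨l, hl₁, hl₂, hl⟩ :=
    ((hconst q₁ hq₁').and ((hconst q₂ hq₂').and (eventually_gt_atTop 0))).exists
  refine ⟨l, hl, fun n _ α _ _ σ _ _ hW => ?_⟩
  filter_upwards [hW] with x ⟨hW₁, hW₂, _⟩
  exact ⟨(wolff_withDensity_le_of_wolff_rpow_le hp σ ofReal_ne_top
      (gamma2_eq_gamma1 p q₁ q₂ ▸ one_le_gamma1 hp hq₂.le hq₁.le (by linarith)) hq₁.le hW₁).trans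
        (mul_le_mul_left hl₁ _),
    (wolff_withDensity_le_of_wolff_rpow_le hp σ ofReal_ne_top
      (one_le_gamma1 hp hq₁.le hq₂.le hq) hq₂.le hW₂).trans (mul_le_mul_left hl₂ _)⟩

/-- Claim 4 in the proof of Theorem 1.3: under (F) and (W_λ), for some `λ₂ > 0` depending
only on `p, q₁, q₂, λ`, the pair `(λ₂(W_{α,p}σ + (W_{α,p}σ)^{γ₁}), λ₂(W_{α,p}σ +
(W_{α,p}σ)^{γ₂}))` is a supersolution of the Wolff integral system, Lebesgue-a.e. -/
theorem wolff_supersolution_weaker (p q₁ q₂ lam : ℝ)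
    (hp : 1 < p) (hq₁ : 0 < q₁) (hq₁' : q₁ < p - 1)
    (hq₂ : 0 < q₂) (hq₂' : q₂ < p - 1) (hlam : 0 < lam) :
    ∃ lam₂ : ℝ, 0 < lam₂ ∧
      ∀ (n : ℕ), 1 ≤ n →
        ∀ α : ℝ, 0 < α → α < (n : ℝ) / p →
          ∀ σ : Measure (Rn n), IsLocallyFiniteMeasure σ →
            condF n α p σ → condW n α p q₁ q₂ lam σ →
            ∀ᵐ x ∂(volume : Measure (Rn n)),
              (wolff n α p (σ.withDensity fun y =>
                (ENNReal.ofReal lam₂ *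
                  (wolff n α p σ y + (wolff n α p σ y) ^ gamma2 p q₁ q₂)) ^ q₁) x ≤
                ENNReal.ofReal lam₂ *
                  (wolff n α p σ x + (wolff n α p σ x) ^ gamma1 p q₁ q₂)) ∧
              (wolff n α p (σ.withDensity fun y =>
                (ENNReal.ofReal lam₂ *
                  (wolff n α p σ y + (wolff n α p σ y) ^ gamma1 p q₁ q₂)) ^ q₂) x ≤
                ENNReal.ofReal lam₂ *
                  (wolff n α p σ x + (wolff n α p σ x) ^ gamma2 p q₁ q₂)) :=
  wolff_supersolution_weaker_general p q₁ q₂ lam hq₁ hq₁' hq₂ hq₂'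
end
end
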